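/- arXiv:1904.10495 — 8 statements merged into one kernel-verified Lean document; each statement's English description precedes it below -/
import Mathlib

section
/- Let $\overline{F}$ be the tail function of a probability law $\mathcal{T}$ on $[0,\infty]$ and $r\in(0,\infty)$. The tail function of the law $\mathcal{T}^{\delta_r}$ obtained by repeated deterministic reset at period $r$ satisfies $\overline{F}^{\delta_r}(t)=\overline{F}(r)^k\,\overline{F}(t-rk)$ for every $k\in\mathbb{N}_0$ and $t\in[kr,(k+1)r)$. -/
open MeasureTheory ProbabilityTheory
open scoped ENNReal

/-- Tail function of the law under repeated deterministic reset at period `r`: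
`F^{δ_r}(t) = F(r)^k F(t - kr)` for `t ∈ [kr, (k+1)r)`. -/
theorem stmt_5 {Ω : Type*} [MeasurableSpace Ω] (P : Measure Ω) [IsProbabilityMeasure P]
    (T : ℕ → Ω → ℝ≥0∞) (hTmeas : ∀ i, Measurable (T i))
    (hindep : iIndepFun T P)
    (hident : ∀ i, P.map (T i) = P.map (T 0))
    (r : ℝ≥0∞) (hr0 : 0 < r) (hrtop : r ≠ ⊤)
    (F : ℝ≥0∞ → ℝ≥0∞) (hF : ∀ u, F u = P {ω | u < T 0 ω})
    (hFr : F r < 1)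
    (Ttil : Ω → ℝ≥0∞)
    (hTtil : ∀ ω : Ω, ∀ k : ℕ, ((∀ i < k, r < T i ω) ∧ T k ω ≤ r) →
      Ttil ω = (k : ℝ≥0∞) * r + T k ω) :
    ∀ k : ℕ, ∀ t : ℝ≥0∞, (k : ℝ≥0∞) * r ≤ t → t < ((k : ℝ≥0∞) + 1) * r →
      P {ω | t < Ttil ω} = F r ^ k * F (t - (k : ℝ≥0∞) * r) := by
  classical
  intro k t hkt htk
  set kr : ℝ≥0∞ := (k : ℝ≥0∞) * r with hkr_def
  have hkrtop : kr ≠ ⊤ := ENNReal.mul_ne_top (ENNReal.natCast_ne_top k) hrtop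
  set a : ℝ≥0∞ := t - kr with ha_def
  have hat : a ≤ r := by
    rw [ha_def]
    exact tsub_le_iff_left.mpr (by
      calc t ≤ ((k : ℝ≥0∞) + 1) * r := le_of_lt htk
      _ = kr + r := by rw [hkr_def, add_mul, one_mul])
  -- identical distribution on measurable sets
  have hident' : ∀ i (S : Set ℝ≥0∞), MeasurableSet S → P (T i ⁻¹' S) = P (T 0 ⁻¹' S) := by
    intro i S hS
    rw [← Measure.map_apply (hTmeas i) hS, hident i, Measure.map_apply (hTmeas 0) hS]
  have hFset : ∀ u, F u = P (T 0 ⁻¹' Set.Ioi u) := fun u => hF u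
  have hFle : F r ≤ F a := by
    rw [hFset, hFset]
    exact measure_mono (Set.preimage_mono (Set.Ioi_subset_Ioi hat))
  -- the three key sets
  set f : ℕ → Set ℝ≥0∞ := fun i => if i = k then Set.Ioc a r else Set.Ioi r with hf_def
  have hfmeas : ∀ i, MeasurableSet (f i) := by
    intro i; rw [hf_def]; dsimp only
    split <;> [exact measurableSet_Ioc; exact measurableSet_Ioi]
  set A : Set Ω := ⋂ i ∈ Finset.range (k + 1), T i ⁻¹' f i with hA_def
  set G : Set Ω := ⋂ i ∈ Finset.range (k + 1), T i ⁻¹' Set.Ioi r with hG_def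
  set N : Set Ω := ⋂ i, T i ⁻¹' Set.Ioi r with hN_def
  set s : Set Ω := {ω | t < Ttil ω} with hs_def
  -- P N = 0
  have hGn : ∀ n : ℕ, P (⋂ i ∈ Finset.range n, T i ⁻¹' Set.Ioi r) = F r ^ n := by
    intro n
    rw [hindep.meas_biInter (fun i _ => ⟨Set.Ioi r, measurableSet_Ioi, rfl⟩)]
    rw [Finset.prod_congr rfl (fun i _ => by
      rw [hident' i _ measurableSet_Ioi, ← hFset r]),
      Finset.prod_const, Finset.card_range]
  have hN0 : P N = 0 := by
    have hle : ∀ n : ℕ, P N ≤ F r ^ n := by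
      intro n
      rw [← hGn n]
      exact measure_mono (fun ω hω => Set.mem_iInter₂.mpr fun i _ => Set.mem_iInter.mp hω i)
    exact le_antisymm
      (ge_of_tendsto' (ENNReal.tendsto_pow_atTop_nhds_zero_of_lt_one hFr) hle)
      zero_le
  -- P G
  have hPG : P G = F r ^ (k + 1) := hGn (k + 1)
  -- P A
  have hPIoc : P (T 0 ⁻¹' Set.Ioc a r) = F a - F r := by
    have hIoc : Set.Ioc a r = Set.Ioi a \ Set.Ioi r := by
      ext x
      simp only [Set.mem_Ioc, Set.mem_diff, Set.mem_Ioi, not_lt]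
    rw [hIoc, Set.preimage_diff,
      measure_diff (Set.preimage_mono (Set.Ioi_subset_Ioi hat))
        ((hTmeas 0 measurableSet_Ioi).nullMeasurableSet) (measure_ne_top P _),
      ← hFset, ← hFset]
  have hPA : P A = F r ^ k * (F a - F r) := by
    rw [hA_def, hindep.meas_biInter (fun i _ => ⟨f i, hfmeas i, rfl⟩)]
    rw [Finset.prod_congr rfl (fun i _ => hident' i _ (hfmeas i))]
    rw [Finset.prod_range_succ]
    have h1 : ∀ i ∈ Finset.range k, P (T 0 ⁻¹' f i) = F r := by
      intro i hi
      have : f i = Set.Ioi r := by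
        rw [hf_def]; dsimp only
        rw [if_neg (Nat.ne_of_lt (Finset.mem_range.mp hi))]
      rw [this, ← hFset]
    rw [Finset.prod_congr rfl h1, Finset.prod_const, Finset.card_range]
    have h2 : f k = Set.Ioc a r := by rw [hf_def]; simp
    rw [h2, hPIoc]
  -- set inclusions
  have hAs : A ⊆ s := by
    intro ω hω
    have hmem : ∀ i ∈ Finset.range (k + 1), T i ω ∈ f i := by
      intro i hi
      exact Set.mem_iInter₂.mp hω i hi
    have hk' : T k ω ∈ Set.Ioc a r := by
      simpa [hf_def] using hmem k (Finset.mem_range.mpr (Nat.lt_succ_self k))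
    have hlt : ∀ i < k, r < T i ω := by
      intro i hik
      simpa [hf_def, Nat.ne_of_lt hik] using
        hmem i (Finset.mem_range.mpr (Nat.lt_succ_of_lt hik))
    have hT : Ttil ω = kr + T k ω := hTtil ω k ⟨hlt, hk'.2⟩
    rw [hs_def]
    show t < Ttil ω
    rw [hT]
    calc t = a + kr := (tsub_add_cancel_of_le hkt).symm
    _ < T k ω + kr := ENNReal.add_lt_add_right hkrtop hk'.1
    _ = kr + T k ω := add_comm _ _
  have hfind : ∀ ω : Ω, ω ∉ N → ∃ j : ℕ, T j ω ≤ r ∧ (∀ i < j, r < T i ω) := by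
    intro ω hω
    have hex : ∃ j, T j ω ≤ r := by
      by_contra h
      push_neg at h
      exact hω (Set.mem_iInter.mpr fun i => lt_of_not_ge (fun hc => absurd hc (not_le.mpr (h i))))
    refine ⟨Nat.find hex, Nat.find_spec hex, fun i hi => ?_⟩
    exact lt_of_not_ge (Nat.find_min hex hi)
  have hGsN : G ⊆ s ∪ N := by
    intro ω hω
    by_cases hN : ω ∈ N
    · exact Or.inr hN
    obtain ⟨j, hj1, hj2⟩ := hfind ω hN
    have hjk : k + 1 ≤ j := by
      by_contra h
      push_neg at h
      exact absurd hj1 (not_le.mpr (Set.mem_iInter₂.mp hω j (Finset.mem_range.mpr h)))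
    have hT : Ttil ω = (j : ℝ≥0∞) * r + T j ω := hTtil ω j ⟨hj2, hj1⟩
    refine Or.inl ?_
    rw [hs_def]
    show t < Ttil ω
    rw [hT]
    calc t < ((k : ℝ≥0∞) + 1) * r := htk
    _ = ((k + 1 : ℕ) : ℝ≥0∞) * r := by push_cast; ring
    _ ≤ (j : ℝ≥0∞) * r := mul_le_mul_left (Nat.cast_le.mpr hjk) r
    _ ≤ (j : ℝ≥0∞) * r + T j ω := le_self_add
  have hsAGN : s ⊆ A ∪ G ∪ N := by
    intro ω hω
    by_cases hN : ω ∈ N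
    · exact Or.inr hN
    obtain ⟨j, hj1, hj2⟩ := hfind ω hN
    have hT : Ttil ω = (j : ℝ≥0∞) * r + T j ω := hTtil ω j ⟨hj2, hj1⟩
    rcases lt_trichotomy j k with hjk | hjk | hjk
    · exfalso
      have : Ttil ω ≤ t := by
        rw [hT]
        calc (j : ℝ≥0∞) * r + T j ω ≤ (j : ℝ≥0∞) * r + r := add_le_add_right hj1 _
        _ = ((j + 1 : ℕ) : ℝ≥0∞) * r := by push_cast; ring
        _ ≤ (k : ℝ≥0∞) * r := mul_le_mul_left (Nat.cast_le.mpr hjk) r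
        _ ≤ t := hkt
      exact absurd hω (not_lt.mpr this)
    · subst hjk
      refine Or.inl (Or.inl (Set.mem_iInter₂.mpr fun i hi => ?_))
      rw [hf_def]
      dsimp only
      rcases eq_or_ne i j with h | h
      · rw [if_pos h]
        subst h
        refine ⟨?_, hj1⟩
        have ht' : t < Ttil ω := hω
        rw [hT] at ht'
        rw [ha_def]
        exact (ENNReal.sub_lt_iff_lt_right hkrtop hkt).mpr
          (by rwa [add_comm] at ht')
      · rw [if_neg h]
        have : i < j := lt_of_le_of_ne (Nat.lt_succ_iff.mp (Finset.mem_range.mp hi)) h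
        exact hj2 i this
    · refine Or.inl (Or.inr (Set.mem_iInter₂.mpr fun i hi => ?_))
      exact hj2 i (lt_of_lt_of_le (Finset.mem_range.mp hi) hjk)
  -- measurability and disjointness
  have hAmeas : MeasurableSet A :=
    Finset.measurableSet_biInter _ (fun i _ => hTmeas i (hfmeas i))
  have hGmeas : MeasurableSet G :=
    Finset.measurableSet_biInter _ (fun i _ => hTmeas i measurableSet_Ioi)
  have hdisj : Disjoint A G := by
    rw [Set.disjoint_left]
    intro ω hA hG
    have h1 : T k ω ∈ Set.Ioc a r := by
      simpa [hf_def] using Set.mem_iInter₂.mp hA k (Finset.mem_range.mpr (Nat.lt_succ_self k))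
    have h2 : r < T k ω := Set.mem_iInter₂.mp hG k (Finset.mem_range.mpr (Nat.lt_succ_self k))
    exact absurd h2 (not_lt.mpr h1.2)
  -- conclude
  have hle1 : P s ≤ P (A ∪ G) := by
    calc P s ≤ P (A ∪ G ∪ N) := measure_mono hsAGN
    _ ≤ P (A ∪ G) + P N := measure_union_le _ _
    _ = P (A ∪ G) := by rw [hN0, add_zero]
  have hle2 : P (A ∪ G) ≤ P s := by
    calc P (A ∪ G) ≤ P (s ∪ N) := measure_mono (Set.union_subset
      (hAs.trans Set.subset_union_left) hGsN)
    _ ≤ P s + P N := measure_union_le _ _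
    _ = P s := by rw [hN0, add_zero]
  have : P s = P A + P G := by
    rw [le_antisymm hle1 hle2, measure_union hdisj hGmeas]
  rw [this, hPA, hPG, pow_succ, ← mul_add, tsub_add_cancel_of_le hFle]
end

section
/- Let $\overline{F}$ be the tail function of a probability law $\mathcal{T}$ on $[0,\infty]$ with $\overline{F}(0)>0$ and $\overline{F}(r)<1$ for $r>0$. If $\overline{F}$ is supermultiplicative, then for every $r\in(0,\infty)$ and every $t\in[0,\infty)$, $\overline{F}^{\delta_r}(t)=\overline{F}(r)^{\lfloor t/r\rfloor}\overline{F}(t-r\lfloor t/r\rfloor)\le\overline{F}(t)$; i.e. $\mathcal{T}^{\delta_r}$ is first-order stochastically dominated by $\mathcal{T}$. -/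
/-- If `F` is supermultiplicative, then the deterministically-reset tail
`F(r)^{⌊t/r⌋} F(t - r⌊t/r⌋)` is pointwise below `F(t)`: first-order stochastic dominance. -/
theorem stmt_6 (F : ℝ → ℝ)
    (h_anti : AntitoneOn F (Set.Ici 0))
    (h_rc : ∀ x ∈ Set.Ici (0:ℝ), ContinuousWithinAt F (Set.Ici x) x)
    (h_range : ∀ x ∈ Set.Ici (0:ℝ), F x ∈ Set.Icc (0:ℝ) 1)
    (h_pos : 0 < F 0)
    (h_lt1 : ∀ r : ℝ, 0 < r → F r < 1)
    (h_super : ∀ x ∈ Set.Ici (0:ℝ), ∀ y ∈ Set.Ici (0:ℝ), F x * F y ≤ F (x + y)) :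
    ∀ r : ℝ, 0 < r → ∀ t : ℝ, 0 ≤ t →
      F r ^ (⌊t / r⌋₊) * F (t - r * ⌊t / r⌋₊) ≤ F t := by
  intro r hr t ht
  have hFr0 : 0 ≤ F r := (h_range r (le_of_lt hr)).1
  have key : ∀ k : ℕ, ∀ t : ℝ, r * k ≤ t → F r ^ k * F (t - r * k) ≤ F t := by
    intro k
    induction k with
    | zero => intro t ht'; simp
    | succ k ih =>
      intro t ht'
      push_cast at ht'
      have hk1 : (0:ℝ) ≤ r * k := by positivity
      have hsub : (0:ℝ) ≤ t - r * (k + 1) := by linarith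
      have h1 : F r * F (t - r * (k + 1)) ≤ F (r + (t - r * (k + 1))) :=
        h_super r (le_of_lt hr) _ hsub
      have heq : r + (t - r * (k + 1)) = t - r * k := by ring
      rw [heq] at h1
      push_cast
      calc F r ^ (k + 1) * F (t - r * ((k:ℝ) + 1))
          = F r ^ k * (F r * F (t - r * (k + 1))) := by rw [pow_succ]; ring
        _ ≤ F r ^ k * F (t - r * k) := by
            exact mul_le_mul_of_nonneg_left h1 (pow_nonneg hFr0 k)
        _ ≤ F t := ih t (by linarith)
  have hk : r * (⌊t / r⌋₊ : ℝ) ≤ t := by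
    have := Nat.floor_le (a := t / r) (by positivity)
    calc r * (⌊t / r⌋₊ : ℝ) ≤ r * (t / r) := by nlinarith
      _ = t := by field_simp
  have := key ⌊t / r⌋₊ t hk
  push_cast at this ⊢
  convert this using 3 <;> push_cast <;> ring
end

section
/- Let $\overline{F}:[0,\infty)\to(0,1]$ be measurable and bounded, and suppose $\int_0^t \overline{F}(u)\overline{F}(t-u)\,\mathrm{d}u = t\,\overline{F}(t)$ for all $t\in[0,\infty)$, where $\overline{F}$ is the tail function of a probability law $\mathcal{T}$ on $[0,\infty]$ with $\overline{F}(0)>0$ and $\overline{F}(r)<1$ for $r>0$. Then $\mathcal{T}$ is the exponential law: there is $\lambda\in(0,\infty)$ with $\overline{F}(t)=e^{-\lambda t}$ for all $t\ge 0$, and moreover $\lambda=1/\int_0^\infty\overline{F}$. -/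
open MeasureTheory Set Real Filter intervalIntegral
open scoped Topology

/-- substitution `t ↦ t+u` on `Ici u`. -/
lemma shift_Ici (u : ℝ) (W : ℝ → ℝ) :
    ∫ t in Ici u, W (t - u) = ∫ t in Ici (0:ℝ), W t := by
  have : ∫ t in Ici u, W (t - u) = ∫ t, (Ici u).indicator (fun t => W (t - u)) t := by
    rw [MeasureTheory.integral_indicator measurableSet_Ici]
  rw [this, ← integral_add_right_eq_self (μ := volume)
      (fun t => (Ici u).indicator (fun t => W (t - u)) t) u]
  rw [← MeasureTheory.integral_indicator measurableSet_Ici]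
  congr 1
  ext t
  by_cases ht : t ∈ Ici (0:ℝ)
  · have : t + u ∈ Ici u := by simpa using ht.out
    simp [indicator_of_mem this, indicator_of_mem ht]
  · have : t + u ∉ Ici u := by simp at ht ⊢; linarith
    simp [indicator_of_notMem this, indicator_of_notMem ht]

lemma aux_xexp_le {b : ℝ} (hb : 0 < b) {t : ℝ} (ht : 0 ≤ t) :
    t * Real.exp (-b * t) ≤ (2 / b) * Real.exp (-(b / 2) * t) := by
  have h1 : (b / 2) * t ≤ Real.exp ((b / 2) * t) := by
    have := Real.add_one_le_exp ((b / 2) * t); linarith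
  have hE : (0:ℝ) < Real.exp ((b / 2) * t) := Real.exp_pos _
  have h2 : t ≤ (2 / b) * Real.exp ((b / 2) * t) := by
    have hb' : (0:ℝ) < 2 / b := by positivity
    have := mul_le_mul_of_nonneg_left h1 (le_of_lt hb')
    calc t = (2 / b) * ((b / 2) * t) := by field_simp
      _ ≤ (2 / b) * Real.exp ((b / 2) * t) := this
  have hsplit : Real.exp (-b * t) = Real.exp (-(b/2) * t) * Real.exp (-(b/2) * t) := by
    rw [← Real.exp_add]; ring_nf
  have hinv : Real.exp (-(b/2) * t) = (Real.exp ((b/2) * t))⁻¹ := by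
    rw [← Real.exp_neg]; ring_nf
  rw [hsplit, hinv]
  have hE' : (0:ℝ) < (Real.exp ((b / 2) * t))⁻¹ := by positivity
  calc t * ((Real.exp ((b/2) * t))⁻¹ * (Real.exp ((b/2) * t))⁻¹)
      = (t * (Real.exp ((b/2) * t))⁻¹) * (Real.exp ((b/2) * t))⁻¹ := by ring
    _ ≤ (2 / b) * (Real.exp ((b/2) * t))⁻¹ := by
        have : t * (Real.exp ((b/2) * t))⁻¹ ≤ 2 / b := by
          rw [mul_inv_le_iff₀ hE]
          calc t ≤ (2 / b) * Real.exp ((b/2) * t) := h2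
            _ = 2 / b * Real.exp ((b/2) * t) := rfl
        exact mul_le_mul_of_nonneg_right this (le_of_lt hE')
    _ = (2 / b) * (Real.exp ((b/2) * t))⁻¹ := rfl

lemma aux_int_texp {b : ℝ} (hb : 0 < b) :
    IntegrableOn (fun t => t * Real.exp (-b * t)) (Ioi (0:ℝ)) := by
  refine Integrable.mono' ((exp_neg_integrableOn_Ioi 0 (half_pos hb)).const_mul (2 / b)) ?_ ?_
  · exact ((measurable_id.mul ((measurable_id.const_mul (-b)).exp)).aestronglyMeasurable)
  · refine (ae_restrict_iff' measurableSet_Ioi).2 (Eventually.of_forall fun t ht => ?_)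
    have ht' : (0:ℝ) ≤ t := le_of_lt ht
    have h := aux_xexp_le hb ht'
    have : ‖t * Real.exp (-b * t)‖ = t * Real.exp (-b * t) := by
      rw [Real.norm_eq_abs, abs_of_nonneg (by positivity)]
    rw [this]
    calc t * Real.exp (-b * t) ≤ (2 / b) * Real.exp (-(b/2) * t) := h
      _ = 2 / b * Real.exp (-(b / 2) * t) := rfl

lemma aux_int_exp_val {b : ℝ} (hb : 0 < b) (a : ℝ) :
    ∫ t in Ioi a, Real.exp (-b * t) = Real.exp (-b * a) / b := by
  have hderiv : ∀ x ∈ Ioi a, HasDerivAt (fun t => -Real.exp (-b * t) / b)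
      (Real.exp (-b * x)) x := by
    intro x _
    have h1 : HasDerivAt (fun t : ℝ => -b * t) (-b) x := by
      simpa using (hasDerivAt_id x).const_mul (-b)
    have h2 := (h1.exp).neg.div_const b
    exact h2.congr_deriv (by rw [div_eq_iff hb.ne']; ring)
  have htend : Tendsto (fun t => -Real.exp (-b * t) / b) atTop (𝓝 0) := by
    have : Tendsto (fun t : ℝ => -b * t) atTop atBot :=
      tendsto_id.const_mul_atTop_of_neg (neg_neg_iff_pos.2 hb)
    have := (Real.tendsto_exp_atBot.comp this).neg.div_const b
    simpa using this
  have hcont : ContinuousWithinAt (fun t => -Real.exp (-b * t) / b) (Ici a) a := by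
    apply Continuous.continuousWithinAt
    continuity
  rw [MeasureTheory.integral_Ioi_of_hasDerivAt_of_tendsto hcont hderiv
      ((exp_neg_integrableOn_Ioi a hb)) htend]
  field_simp
  ring

/-- Fubini for the triangle `0 < u ≤ t`. -/
lemma fub_triangle {lam : ℝ} (hlam : 0 < lam) (G : ℝ → ℝ → ℝ)
    (hG : Measurable (Function.uncurry G))
    (hbd : ∀ t, 0 < t → ∀ u ∈ Ioc (0:ℝ) t, ‖G t u‖ ≤ Real.exp (-lam * t)) :
    ∫ t in Ioi (0:ℝ), (∫ u in Ioc (0:ℝ) t, G t u) =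
      ∫ u in Ioi (0:ℝ), (∫ t in Ici u, G t u) := by
  classical
  set J : ℝ → ℝ → ℝ := fun t u => if u ∈ Ioc (0:ℝ) t then G t u else 0 with hJ
  have hSmeas : MeasurableSet {p : ℝ × ℝ | p.2 ∈ Ioc (0:ℝ) p.1} := by
    apply MeasurableSet.inter
    · exact measurableSet_lt measurable_const measurable_snd
    · exact measurableSet_le measurable_snd measurable_fst
  have hJmeas : Measurable (Function.uncurry J) := by
    have : Function.uncurry J = fun p : ℝ × ℝ =>
        if p ∈ {p : ℝ × ℝ | p.2 ∈ Ioc (0:ℝ) p.1} then Function.uncurry G p else 0 := by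
      ext p; rfl
    rw [this]
    exact Measurable.ite hSmeas hG measurable_const
  -- for each t > 0, J t is integrable, supported in Ioc 0 t
  have hJind : ∀ t, (fun u => J t u) = (Ioc (0:ℝ) t).indicator (fun u => G t u) := by
    intro t; ext u
    by_cases hu : u ∈ Ioc (0:ℝ) t
    · rw [indicator_of_mem hu]; exact if_pos hu
    · rw [indicator_of_notMem hu]; exact if_neg hu
  have hGint : ∀ t, 0 < t → IntegrableOn (fun u => G t u) (Ioc (0:ℝ) t) := by
    intro t ht
    refine Measure.integrableOn_of_bounded (M := Real.exp (-lam * t)) (by simp) ?_ ?_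
    · exact (hG.comp (measurable_prodMk_left (x := t))).aestronglyMeasurable
    · refine (ae_restrict_iff' measurableSet_Ioc).2 (Eventually.of_forall fun u hu => ?_)
      exact hbd t ht u hu
  have hJint : ∀ t, 0 < t → Integrable (fun u => J t u) := by
    intro t ht
    rw [hJind t]
    exact (hGint t ht).integrable_indicator measurableSet_Ioc
  -- integrability on the product
  have hint : Integrable (Function.uncurry J) ((volume.restrict (Ioi 0)).prod volume) := by
    rw [MeasureTheory.integrable_prod_iff hJmeas.aestronglyMeasurable]
    constructor
    · exact (ae_restrict_iff' measurableSet_Ioi).2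
        (Eventually.of_forall fun t ht => hJint t ht)
    · refine Integrable.mono' (aux_int_texp hlam) ?_ ?_
      · exact (hJmeas.norm.aestronglyMeasurable.integral_prod_right')
      · refine (ae_restrict_iff' measurableSet_Ioi).2 (Eventually.of_forall fun t ht => ?_)
        have hnint : Integrable (fun u => ‖J t u‖) := (hJint t ht).norm
        have h1 : ∫ u, ‖J t u‖ = ∫ u in Ioc (0:ℝ) t, ‖G t u‖ := by
          have heq : ∀ u, ‖J t u‖ = (Ioc (0:ℝ) t).indicator (fun u => ‖G t u‖) u := by
            intro u
            rw [congrFun (hJind t) u, norm_indicator_eq_indicator_norm]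
          simp only [heq]
          rw [MeasureTheory.integral_indicator measurableSet_Ioc]
        have h2 : ∫ u in Ioc (0:ℝ) t, ‖G t u‖ ≤ ∫ _u in Ioc (0:ℝ) t, Real.exp (-lam * t) := by
          refine setIntegral_mono_on ?_ (integrableOn_const (hs := measure_Ioc_lt_top.ne))
            measurableSet_Ioc ?_
          · exact ((hGint t ht).norm)
          · intro u hu; exact hbd t ht u hu
        have h3 : ∫ _u in Ioc (0:ℝ) t, Real.exp (-lam * t) = t * Real.exp (-lam * t) := by
          rw [setIntegral_const]
          simp [Real.volume_Ioc, le_of_lt (show (0:ℝ) < t from ht)]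
        have h4 : (0:ℝ) ≤ ∫ u, ‖J t u‖ := integral_nonneg fun u => norm_nonneg _
        show ‖∫ u, ‖J t u‖‖ ≤ t * Real.exp (-lam * t)
        rw [Real.norm_of_nonneg h4, h1]
        rw [h3] at h2
        exact h2
  -- swap
  have hswap := MeasureTheory.integral_integral_swap (μ := volume.restrict (Ioi 0))
      (ν := volume) (f := J) hint
  have hLHS : ∫ t in Ioi (0:ℝ), (∫ u in Ioc (0:ℝ) t, G t u)
      = ∫ t in Ioi (0:ℝ), ∫ u, J t u := by
    refine setIntegral_congr_fun measurableSet_Ioi fun t _ => ?_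
    rw [hJind t, MeasureTheory.integral_indicator measurableSet_Ioc]
  have hRHS : ∫ u, ∫ t in Ioi (0:ℝ), J t u
      = ∫ u in Ioi (0:ℝ), (∫ t in Ici u, G t u) := by
    rw [← MeasureTheory.integral_indicator measurableSet_Ioi]
    congr 1
    ext u
    by_cases hu : u ∈ Ioi (0:ℝ)
    · rw [indicator_of_mem hu]
      have : ∀ t, J t u = (Ici u).indicator (fun t => G t u) t := by
        intro t
        by_cases htu : u ≤ t
        · have h1 : u ∈ Ioc (0:ℝ) t := ⟨hu.out, htu⟩
          have h2 : t ∈ Ici u := htu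
          rw [indicator_of_mem h2]; exact if_pos h1
        · have h1 : u ∉ Ioc (0:ℝ) t := fun h => htu h.2
          have h2 : t ∉ Ici u := htu
          rw [indicator_of_notMem h2]; exact if_neg h1
      calc ∫ t in Ioi (0:ℝ), J t u
          = ∫ t in Ioi (0:ℝ), (Ici u).indicator (fun t => G t u) t := by
            exact setIntegral_congr_fun measurableSet_Ioi fun t _ => this t
        _ = ∫ t in Ioi (0:ℝ) ∩ Ici u, G t u := by
            rw [setIntegral_indicator measurableSet_Ici]
        _ = ∫ t in Ici u, G t u := by
            have hss : Ioi (0:ℝ) ∩ Ici u = Ici u :=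
              Set.inter_eq_self_of_subset_right (fun x hx => lt_of_lt_of_le hu.out hx)
            rw [hss]
    · rw [indicator_of_notMem hu]
      have : ∀ t, J t u = 0 := by
        intro t
        have h1 : u ∉ Ioc (0:ℝ) t := by
          intro h; exact hu h.1
        exact if_neg h1
      simp only [this]
      simp
  rw [hLHS, hswap, hRHS]

section Laplace

variable {F : ℝ → ℝ} (h_meas : Measurable F) (h01 : ∀ t, 0 < t → ‖F t‖ ≤ 1)

include h_meas h01 in
lemma lap_integrable {lam : ℝ} (hlam : 0 < lam) :
    IntegrableOn (fun t => Real.exp (-lam * t) * F t) (Ioi (0:ℝ)) := by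
  refine Integrable.mono' (exp_neg_integrableOn_Ioi 0 hlam) ?_ ?_
  · exact (((measurable_id.const_mul (-lam)).exp.mul h_meas).aestronglyMeasurable)
  · refine (ae_restrict_iff' measurableSet_Ioi).2 (Eventually.of_forall fun t ht => ?_)
    have : ‖Real.exp (-lam * t) * F t‖ = Real.exp (-lam * t) * ‖F t‖ := by
      rw [norm_mul, Real.norm_of_nonneg (le_of_lt (Real.exp_pos _))]
    rw [this]
    calc Real.exp (-lam * t) * ‖F t‖ ≤ Real.exp (-lam * t) * 1 :=
          mul_le_mul_of_nonneg_left (h01 t ht) (le_of_lt (Real.exp_pos _))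
      _ = Real.exp (-lam * t) := mul_one _

include h_meas h01 in
lemma lap_t_integrable {lam : ℝ} (hlam : 0 < lam) :
    IntegrableOn (fun t => t * (Real.exp (-lam * t) * F t)) (Ioi (0:ℝ)) := by
  refine Integrable.mono' (aux_int_texp hlam) ?_ ?_
  · exact ((measurable_id.mul ((measurable_id.const_mul (-lam)).exp.mul h_meas)).aestronglyMeasurable)
  · refine (ae_restrict_iff' measurableSet_Ioi).2 (Eventually.of_forall fun t ht => ?_)
    have h1 : ‖t * (Real.exp (-lam * t) * F t)‖ = t * Real.exp (-lam * t) * ‖F t‖ := by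
      rw [norm_mul, norm_mul, Real.norm_of_nonneg (le_of_lt ht),
        Real.norm_of_nonneg (le_of_lt (Real.exp_pos _)), mul_assoc]
    rw [h1]
    calc t * Real.exp (-lam * t) * ‖F t‖ ≤ t * Real.exp (-lam * t) * 1 := by
          refine mul_le_mul_of_nonneg_left (h01 t ht) ?_
          exact mul_nonneg (le_of_lt ht) (le_of_lt (Real.exp_pos _))
      _ = t * Real.exp (-lam * t) := mul_one _

include h_meas h01 in
lemma lap_deriv {lam : ℝ} (hlam : 0 < lam) :
    HasDerivAt (fun l => ∫ t in Ioi (0:ℝ), Real.exp (-l * t) * F t)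
      (-∫ t in Ioi (0:ℝ), t * (Real.exp (-lam * t) * F t)) lam := by
  have key := hasDerivAt_integral_of_dominated_loc_of_deriv_le
    (μ := volume.restrict (Ioi 0)) (x₀ := lam)
    (F := fun l t => Real.exp (-l * t) * F t)
    (F' := fun l t => -(t * (Real.exp (-l * t) * F t)))
    (bound := fun t => t * Real.exp (-(lam/2) * t))
    (Metric.ball_mem_nhds lam (half_pos hlam))
    (Eventually.of_forall fun l =>
      (((measurable_id.const_mul (-l)).exp.mul h_meas).aestronglyMeasurable))
    (lap_integrable h_meas h01 hlam)
    (((measurable_id.mul ((measurable_id.const_mul (-lam)).exp.mul h_meas)).neg).aestronglyMeasurable)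
    ?_ (aux_int_texp (half_pos hlam)) ?_
  · have := key.2
    rwa [MeasureTheory.integral_neg] at this
  · refine (ae_restrict_iff' measurableSet_Ioi).2 (Eventually.of_forall fun t ht => ?_)
    intro l hl
    have hl2 : lam / 2 ≤ l := by
      have := abs_lt.1 (mem_ball_iff_norm.1 hl)
      linarith [this.1]
    have h1 : ‖-(t * (Real.exp (-l * t) * F t))‖ = t * Real.exp (-l * t) * ‖F t‖ := by
      rw [norm_neg, norm_mul, norm_mul, Real.norm_of_nonneg (le_of_lt ht),
        Real.norm_of_nonneg (le_of_lt (Real.exp_pos _)), mul_assoc]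
    rw [h1]
    have h2 : Real.exp (-l * t) ≤ Real.exp (-(lam/2) * t) := by
      apply Real.exp_le_exp.2
      have := le_of_lt (show (0:ℝ) < t from ht)
      nlinarith
    calc t * Real.exp (-l * t) * ‖F t‖ ≤ t * Real.exp (-l * t) * 1 := by
          refine mul_le_mul_of_nonneg_left (h01 t ht) ?_
          exact mul_nonneg (le_of_lt ht) (le_of_lt (Real.exp_pos _))
      _ = t * Real.exp (-l * t) := mul_one _
      _ ≤ t * Real.exp (-(lam/2) * t) :=
          mul_le_mul_of_nonneg_left h2 (le_of_lt ht)
  · refine (ae_restrict_iff' measurableSet_Ioi).2 (Eventually.of_forall fun t _ => ?_)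
    intro l _
    have h1 : HasDerivAt (fun l : ℝ => -l * t) (-t) l := by
      simpa using ((hasDerivAt_id l).neg.mul_const t)
    have h2 := (h1.exp).mul_const (F t)
    exact h2.congr_deriv (by ring)

end Laplace

section Conv

variable {F : ℝ → ℝ} (h_meas : Measurable F) (h01 : ∀ t, 0 ≤ t → 0 ≤ F t ∧ F t ≤ 1)
  (h_conv : ∀ t : ℝ, 0 ≤ t → ∫ u in (0:ℝ)..t, F u * F (t - u) = t * F t)

include h_meas h01 h_conv in
lemma lap_conv {lam : ℝ} (hlam : 0 < lam) :
    ∫ t in Ioi (0:ℝ), t * (Real.exp (-lam * t) * F t)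
      = (∫ t in Ioi (0:ℝ), Real.exp (-lam * t) * F t)
        * (∫ t in Ioi (0:ℝ), Real.exp (-lam * t) * F t) := by
  have h01' : ∀ t, 0 ≤ t → ‖F t‖ ≤ 1 := fun t ht => by
    rw [Real.norm_of_nonneg (h01 t ht).1]; exact (h01 t ht).2
  have step1 : ∫ t in Ioi (0:ℝ), t * (Real.exp (-lam * t) * F t)
      = ∫ t in Ioi (0:ℝ), (∫ u in Ioc (0:ℝ) t, Real.exp (-lam * t) * (F u * F (t - u))) := by
    refine setIntegral_congr_fun measurableSet_Ioi fun t ht => ?_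
    have ht' : (0:ℝ) ≤ t := le_of_lt ht
    have h2 : ∫ u in Ioc (0:ℝ) t, F u * F (t - u) = t * F t := by
      rw [← intervalIntegral.integral_of_le ht']
      exact h_conv t ht'
    rw [MeasureTheory.integral_const_mul, h2]
    ring
  rw [step1]
  set G : ℝ → ℝ → ℝ := fun t u => Real.exp (-lam * t) * (F u * F (t - u)) with hG
  have hGmeas : Measurable (Function.uncurry G) := by
    apply Measurable.mul
    · exact ((measurable_fst.const_mul (-lam)).exp)
    · exact (h_meas.comp measurable_snd).mul (h_meas.comp (measurable_fst.sub measurable_snd))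
  have hGbd : ∀ t, 0 < t → ∀ u ∈ Ioc (0:ℝ) t, ‖G t u‖ ≤ Real.exp (-lam * t) := by
    intro t _ u hu
    have hu0 : (0:ℝ) ≤ u := le_of_lt hu.1
    have htu : (0:ℝ) ≤ t - u := by linarith [hu.2]
    have : ‖G t u‖ = Real.exp (-lam * t) * (‖F u‖ * ‖F (t - u)‖) := by
      rw [hG]
      simp only [norm_mul, Real.norm_of_nonneg (le_of_lt (Real.exp_pos _))]
    rw [this]
    calc Real.exp (-lam * t) * (‖F u‖ * ‖F (t - u)‖)
        ≤ Real.exp (-lam * t) * (1 * 1) := by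
          refine mul_le_mul_of_nonneg_left ?_ (le_of_lt (Real.exp_pos _))
          exact mul_le_mul (h01' u hu0) (h01' (t - u) htu) (norm_nonneg _) zero_le_one
      _ = Real.exp (-lam * t) := by ring
  rw [fub_triangle hlam G hGmeas hGbd]
  have inner : ∀ u, 0 < u → (∫ t in Ici u, G t u)
      = (∫ t in Ioi (0:ℝ), Real.exp (-lam * t) * F t) * (Real.exp (-lam * u) * F u) := by
    intro u hu
    have heq : ∀ t, t ∈ Ici u →
        G t u = (fun s => Real.exp (-lam * s) * F s) (t - u) * (Real.exp (-lam * u) * F u) := by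
      intro t _
      rw [hG]
      simp only []
      have : Real.exp (-lam * (t - u)) * Real.exp (-lam * u) = Real.exp (-lam * t) := by
        rw [← Real.exp_add]; ring_nf
      calc Real.exp (-lam * t) * (F u * F (t - u))
          = (Real.exp (-lam * (t - u)) * Real.exp (-lam * u)) * (F u * F (t - u)) := by rw [this]
        _ = Real.exp (-lam * (t - u)) * F (t - u) * (Real.exp (-lam * u) * F u) := by ring
    rw [setIntegral_congr_fun measurableSet_Ici heq,
      MeasureTheory.integral_mul_const, shift_Ici u (fun s => Real.exp (-lam * s) * F s),
      MeasureTheory.integral_Ici_eq_integral_Ioi]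
  calc ∫ u in Ioi (0:ℝ), (∫ t in Ici u, G t u)
      = ∫ u in Ioi (0:ℝ),
          (∫ t in Ioi (0:ℝ), Real.exp (-lam * t) * F t) * (Real.exp (-lam * u) * F u) := by
        exact setIntegral_congr_fun measurableSet_Ioi fun u hu => inner u hu
    _ = (∫ t in Ioi (0:ℝ), Real.exp (-lam * t) * F t)
        * (∫ t in Ioi (0:ℝ), Real.exp (-lam * t) * F t) := by
        rw [MeasureTheory.integral_const_mul]

end Conv

lemma sw_zero {K : ℝ → ℝ} (hK : ContinuousOn K (Icc 0 1))
    (hmom : ∀ n : ℕ, ∫ x in Icc (0:ℝ) 1, x ^ n * K x = 0) :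
    ∀ x ∈ Icc (0:ℝ) 1, K x = 0 := by
  have hKint : IntegrableOn K (Icc (0:ℝ) 1) := hK.integrableOn_compact isCompact_Icc
  have hKsqint : IntegrableOn (fun x => K x * K x) (Icc (0:ℝ) 1) :=
    (hK.mul hK).integrableOn_compact isCompact_Icc
  have hKabsint : IntegrableOn (fun x => |K x|) (Icc (0:ℝ) 1) := hKint.abs
  -- every polynomial kills K
  have hpoly : ∀ p : Polynomial ℝ, ∫ x in Icc (0:ℝ) 1, p.eval x * K x = 0 := by
    intro p
    have hrw : ∀ x : ℝ, p.eval x * K x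
        = ∑ i ∈ Finset.range (p.natDegree + 1), p.coeff i * (x ^ i * K x) := by
      intro x
      rw [Polynomial.eval_eq_sum_range, Finset.sum_mul]
      exact Finset.sum_congr rfl fun i _ => by ring
    simp only [hrw]
    rw [MeasureTheory.integral_finset_sum]
    · refine Finset.sum_eq_zero fun i _ => ?_
      rw [MeasureTheory.integral_const_mul, hmom i, mul_zero]
    · intro i _
      exact (((continuous_pow i).continuousOn.mul hK).integrableOn_compact isCompact_Icc).const_mul _
  -- the square integrates to zero
  have hsq0 : ∫ x in Icc (0:ℝ) 1, K x * K x = 0 := by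
    have hnonneg : 0 ≤ ∫ x in Icc (0:ℝ) 1, K x * K x :=
      setIntegral_nonneg measurableSet_Icc fun x _ => mul_self_nonneg _
    have hub : ∀ ε : ℝ, 0 < ε →
        ∫ x in Icc (0:ℝ) 1, K x * K x ≤ ε * ∫ x in Icc (0:ℝ) 1, |K x| := by
      intro ε hε
      obtain ⟨p, hp⟩ := exists_polynomial_near_of_continuousOn 0 1 K hK ε hε
      have key : ∫ x in Icc (0:ℝ) 1, K x * K x
          = ∫ x in Icc (0:ℝ) 1, K x * (K x - p.eval x) := by
        have hsub : ∀ x : ℝ, K x * (K x - p.eval x) = K x * K x - p.eval x * K x := by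
          intro x; ring
        simp only [hsub]
        rw [MeasureTheory.integral_sub (g := fun x => Polynomial.eval x p * K x) hKsqint
          (((Polynomial.continuous p).continuousOn.mul hK).integrableOn_compact isCompact_Icc),
          hpoly p, sub_zero]
      rw [key]
      calc ∫ x in Icc (0:ℝ) 1, K x * (K x - p.eval x)
          ≤ ∫ x in Icc (0:ℝ) 1, |K x| * ε := by
            refine setIntegral_mono_on ?_ (hKabsint.mul_const ε) measurableSet_Icc ?_
            · exact ((hK.mul (hK.sub (Polynomial.continuous p).continuousOn)).integrableOn_compact
                isCompact_Icc)
            · intro x hx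
              calc K x * (K x - p.eval x) ≤ |K x * (K x - p.eval x)| := le_abs_self _
                _ = |K x| * |K x - p.eval x| := abs_mul _ _
                _ ≤ |K x| * ε := by
                    refine mul_le_mul_of_nonneg_left ?_ (abs_nonneg _)
                    rw [abs_sub_comm]
                    exact le_of_lt (hp x hx)
        _ = ε * ∫ x in Icc (0:ℝ) 1, |K x| := by
            rw [MeasureTheory.integral_mul_const, mul_comm]
    refine le_antisymm ?_ hnonneg
    by_contra hlt
    push_neg at hlt
    set I := ∫ x in Icc (0:ℝ) 1, K x * K x
    set C := ∫ x in Icc (0:ℝ) 1, |K x|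
    have hC : 0 ≤ C := setIntegral_nonneg measurableSet_Icc fun x _ => abs_nonneg _
    have hε : 0 < I / (2 * (C + 1)) := by positivity
    have hub2 : I ≤ I / (2 * (C + 1)) * C := hub _ hε
    have h2 : I / (2 * (C + 1)) * C < I := by
      rw [div_mul_eq_mul_div, div_lt_iff₀ (by positivity)]
      nlinarith
    linarith
  -- conclude pointwise vanishing
  intro x₀ hx₀
  by_contra hx0ne
  have hsupp : volume (Function.support (fun x => K x * K x) ∩ Icc (0:ℝ) 1) = 0 := by
    by_contra hpos
    have h2 : 0 < ∫ x in Icc (0:ℝ) 1, K x * K x := by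
      refine (setIntegral_pos_iff_support_of_nonneg_ae ?_ hKsqint).2 ?_
      · exact (ae_restrict_iff' measurableSet_Icc).2
          (Eventually.of_forall fun x _ => mul_self_nonneg _)
      · exact pos_iff_ne_zero.2 hpos
    rw [hsq0] at h2; exact lt_irrefl _ h2
  -- find a small interval where K ≠ 0
  have hcw := hK x₀ hx₀
  rw [Metric.continuousWithinAt_iff] at hcw
  obtain ⟨δ, hδ, hδprop⟩ := hcw (|K x₀| / 2) (by positivity)
  set l := max 0 (x₀ - δ)
  set r := min 1 (x₀ + δ)
  have hlr : l < r := by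
    have h1 : 0 ≤ x₀ := hx₀.1
    have h2 : x₀ ≤ 1 := hx₀.2
    rcases lt_or_ge x₀ 1 with h | h
    · have : l ≤ x₀ := max_le h1 (by linarith)
      have : x₀ < r := lt_min h (by linarith)
      exact lt_of_le_of_lt (max_le h1 (by linarith)) this
    · have hx1 : x₀ = 1 := le_antisymm h2 h
      have : l < 1 := max_lt (by linarith) (by rw [hx1]; linarith)
      have h3 : (1:ℝ) ≤ r := le_min le_rfl (by rw [hx1]; linarith)
      linarith
  have hsub : Ioo l r ⊆ Function.support (fun x => K x * K x) ∩ Icc (0:ℝ) 1 := by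
    intro x hx
    have hxI : x ∈ Icc (0:ℝ) 1 := by
      constructor
      · exact le_of_lt (lt_of_le_of_lt (le_max_left _ _) hx.1)
      · exact le_of_lt (lt_of_lt_of_le hx.2 (min_le_left _ _))
    have hxd : dist x x₀ < δ := by
      rw [Real.dist_eq, abs_sub_lt_iff]
      constructor
      · have := lt_of_lt_of_le hx.2 (min_le_right _ _); linarith
      · have := lt_of_le_of_lt (le_max_right _ _) hx.1; linarith
    have := hδprop hxI hxd
    have hKx : K x ≠ 0 := by
      intro h0
      rw [Real.dist_eq, h0, zero_sub, abs_neg] at this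
      have : |K x₀| < |K x₀| := by
        calc |K x₀| < |K x₀| / 2 := this
          _ < |K x₀| := by
            have : 0 < |K x₀| := abs_pos.2 hx0ne
            linarith
      exact lt_irrefl _ this
    exact ⟨fun h => hKx (mul_self_eq_zero.1 h), hxI⟩
  have : volume (Ioo l r) = 0 :=
    measure_mono_null hsub hsupp
  rw [Real.volume_Ioo] at this
  have : r - l ≤ 0 := by
    by_contra hgt
    push_neg at hgt
    rw [ENNReal.ofReal_eq_zero] at this
    linarith
  linarith

lemma cv_moment (h : ℝ → ℝ) (n : ℕ) :
    ∫ x in Ioo (0:ℝ) 1, x ^ n * (if 0 < x then x * h (-Real.log x) else 0)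
      = ∫ t in Ioi (0:ℝ), Real.exp (-((n:ℝ)+2) * t) * h t := by
  have himg : (fun t => Real.exp (-t)) '' (Ioi (0:ℝ)) = Ioo (0:ℝ) 1 := by
    ext y
    constructor
    · rintro ⟨t, ht, rfl⟩
      exact ⟨Real.exp_pos _, Real.exp_lt_one_iff.2 (by simpa using ht.out)⟩
    · rintro ⟨hy0, hy1⟩
      refine ⟨-Real.log y, ?_, ?_⟩
      · simpa using Real.log_neg hy0 hy1
      · simp [Real.exp_log hy0]
  have hder : ∀ t ∈ Ioi (0:ℝ), HasDerivWithinAt (fun t => Real.exp (-t))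
      (-Real.exp (-t)) (Ioi (0:ℝ)) t := by
    intro t _
    have : HasDerivAt (fun t : ℝ => Real.exp (-t)) (Real.exp (-t) * (-1)) t :=
      (hasDerivAt_id t).neg.exp
    simpa [mul_comm] using this.hasDerivWithinAt
  have hinj : InjOn (fun t => Real.exp (-t)) (Ioi (0:ℝ)) := by
    intro a _ b _ hab
    have := Real.exp_injective hab
    linarith
  rw [← himg, integral_image_eq_integral_abs_deriv_smul measurableSet_Ioi hder hinj]
  refine setIntegral_congr_fun measurableSet_Ioi fun t ht => ?_
  have hpos : (0:ℝ) < Real.exp (-t) := Real.exp_pos _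
  rw [if_pos hpos, Real.log_exp, neg_neg]
  have h1 : |-Real.exp (-t)| = Real.exp (-t) := by
    rw [abs_neg, abs_of_pos hpos]
  rw [smul_eq_mul, h1]
  have h2 : Real.exp (-t) ^ n = Real.exp ((n:ℝ) * (-t)) := (Real.exp_nat_mul (-t) n).symm
  rw [h2]
  rw [show Real.exp (-t) * (Real.exp ((n:ℝ) * (-t)) * (Real.exp (-t) * h t))
      = (Real.exp (-t) * Real.exp ((n:ℝ) * (-t)) * Real.exp (-t)) * h t by ring]
  rw [← Real.exp_add, ← Real.exp_add]
  congr 2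
  ring

section Phi

variable {F : ℝ → ℝ} (h_meas : Measurable F) (h01 : ∀ t, 0 ≤ t → 0 ≤ F t ∧ F t ≤ 1)

include h_meas h01 in
lemma F_intOn {s t : ℝ} (hs : 0 ≤ s) : IntegrableOn F (Ioc s t) := by
  refine Measure.integrableOn_of_bounded (M := 1) (by simp) h_meas.aestronglyMeasurable ?_
  refine (ae_restrict_iff' measurableSet_Ioc).2 (Eventually.of_forall fun u hu => ?_)
  have hu0 : 0 ≤ u := le_of_lt (lt_of_le_of_lt hs hu.1)
  rw [Real.norm_of_nonneg (h01 u hu0).1]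
  exact (h01 u hu0).2

include h_meas h01 in
lemma phi_diff {s t : ℝ} (hs : 0 ≤ s) (hst : s ≤ t) :
    (∫ u in Ioc (0:ℝ) t, F u) - (∫ u in Ioc (0:ℝ) s, F u) = ∫ u in Ioc s t, F u := by
  have hsplit : Ioc (0:ℝ) s ∪ Ioc s t = Ioc (0:ℝ) t := Ioc_union_Ioc_eq_Ioc hs hst
  have hdisj : Disjoint (Ioc (0:ℝ) s) (Ioc s t) := Ioc_disjoint_Ioc_of_le le_rfl
  rw [← hsplit, MeasureTheory.setIntegral_union hdisj measurableSet_Ioc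
    (F_intOn h_meas h01 le_rfl) (F_intOn h_meas h01 hs)]
  ring

include h_meas h01 in
lemma phi_bounds {s t : ℝ} (hs : 0 ≤ s) (hst : s ≤ t) :
    0 ≤ (∫ u in Ioc s t, F u) ∧ (∫ u in Ioc s t, F u) ≤ t - s := by
  constructor
  · refine setIntegral_nonneg measurableSet_Ioc fun u hu => ?_
    exact (h01 u (le_of_lt (lt_of_le_of_lt hs hu.1))).1
  · have h1 : (∫ u in Ioc s t, F u) ≤ ∫ _u in Ioc s t, (1:ℝ) := by
      refine setIntegral_mono_on (F_intOn h_meas h01 hs)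
        (integrableOn_const (hs := measure_Ioc_lt_top.ne)) measurableSet_Ioc fun u hu => ?_
      exact (h01 u (le_of_lt (lt_of_le_of_lt hs hu.1))).2
    have h2 : ∫ _u in Ioc s t, (1:ℝ) = t - s := by
      rw [setIntegral_const]
      simp [Real.volume_Ioc, hst]
    linarith

include h_meas h01 in
lemma phi_lip : LipschitzWith 1 (fun t => ∫ u in Ioc (0:ℝ) t, F u) := by
  have hmax : ∀ t : ℝ, ∫ u in Ioc (0:ℝ) t, F u = ∫ u in Ioc (0:ℝ) (max t 0), F u := by
    intro t
    rcases le_or_gt 0 t with h | h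
    · rw [max_eq_left h]
    · rw [Ioc_eq_empty (by simpa using le_of_lt h), max_eq_right (le_of_lt h)]
      simp
  have key : ∀ s t : ℝ, s ≤ t →
      dist (∫ u in Ioc (0:ℝ) t, F u) (∫ u in Ioc (0:ℝ) s, F u) ≤ dist t s := by
    intro s t hst
    have hms : (0:ℝ) ≤ max s 0 := le_max_right _ _
    have hmst : max s 0 ≤ max t 0 := max_le_max hst le_rfl
    rw [hmax t, hmax s, Real.dist_eq, Real.dist_eq]
    have hd := phi_diff h_meas h01 hms hmst
    have hb := phi_bounds h_meas h01 hms hmst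
    rw [hd]
    have hmtms : max t 0 - max s 0 ≤ t - s := by
      rcases le_or_gt 0 s with h | h
      · rw [max_eq_left (le_trans h hst), max_eq_left h]
      · rcases le_or_gt 0 t with h' | h'
        · rw [max_eq_left h', max_eq_right (le_of_lt h)]; linarith
        · rw [max_eq_right (le_of_lt h'), max_eq_right (le_of_lt h)]; linarith
    rw [abs_of_nonneg hb.1, abs_of_nonneg (by linarith : (0:ℝ) ≤ t - s)]
    linarith [hb.2]
  refine LipschitzWith.of_dist_le_mul fun t s => ?_
  rw [NNReal.coe_one, one_mul]
  rcases le_total s t with h | h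
  · exact key s t h
  · rw [dist_comm (∫ u in Ioc (0:ℝ) t, F u), dist_comm t s]
    exact key t s h

end Phi

section Main

variable {F : ℝ → ℝ} (h_meas : Measurable F) (h01 : ∀ t, 0 ≤ t → 0 ≤ F t ∧ F t ≤ 1)

include h_meas h01 in
lemma lap_phi {lam : ℝ} (hlam : 0 < lam) :
    ∫ t in Ioi (0:ℝ), Real.exp (-lam * t) * (∫ u in Ioc (0:ℝ) t, F u)
      = (∫ u in Ioi (0:ℝ), Real.exp (-lam * u) * F u) / lam := by
  have h01' : ∀ t, 0 ≤ t → ‖F t‖ ≤ 1 := fun t ht => by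
    rw [Real.norm_of_nonneg (h01 t ht).1]; exact (h01 t ht).2
  have step1 : ∫ t in Ioi (0:ℝ), Real.exp (-lam * t) * (∫ u in Ioc (0:ℝ) t, F u)
      = ∫ t in Ioi (0:ℝ), (∫ u in Ioc (0:ℝ) t, Real.exp (-lam * t) * F u) := by
    refine setIntegral_congr_fun measurableSet_Ioi fun t _ => ?_
    rw [MeasureTheory.integral_const_mul]
  rw [step1]
  have hGmeas : Measurable (Function.uncurry (fun t u => Real.exp (-lam * t) * F u)) :=
    ((measurable_fst.const_mul (-lam)).exp).mul (h_meas.comp measurable_snd)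
  have hGbd : ∀ t, 0 < t → ∀ u ∈ Ioc (0:ℝ) t,
      ‖Real.exp (-lam * t) * F u‖ ≤ Real.exp (-lam * t) := by
    intro t _ u hu
    rw [norm_mul, Real.norm_of_nonneg (le_of_lt (Real.exp_pos _))]
    calc Real.exp (-lam * t) * ‖F u‖ ≤ Real.exp (-lam * t) * 1 :=
        mul_le_mul_of_nonneg_left (h01' u (le_of_lt hu.1)) (le_of_lt (Real.exp_pos _))
      _ = Real.exp (-lam * t) := mul_one _
  rw [fub_triangle hlam _ hGmeas hGbd]
  have inner : ∀ u, 0 < u → (∫ t in Ici u, Real.exp (-lam * t) * F u)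
      = (Real.exp (-lam * u) * F u) * (1 / lam) := by
    intro u hu
    rw [MeasureTheory.integral_mul_const, MeasureTheory.integral_Ici_eq_integral_Ioi,
      aux_int_exp_val hlam u]
    ring
  calc ∫ u in Ioi (0:ℝ), (∫ t in Ici u, Real.exp (-lam * t) * F u)
      = ∫ u in Ioi (0:ℝ), (Real.exp (-lam * u) * F u) * (1 / lam) :=
        setIntegral_congr_fun measurableSet_Ioi fun u hu => inner u hu
    _ = (∫ u in Ioi (0:ℝ), Real.exp (-lam * u) * F u) / lam := by
        rw [MeasureTheory.integral_mul_const]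
        ring

include h_meas h01 in
lemma lap_pos {lam : ℝ} (hlam : 0 < lam) (h_pos : ∀ t, 0 ≤ t → 0 < F t) :
    0 < ∫ t in Ioi (0:ℝ), Real.exp (-lam * t) * F t := by
  have h01' : ∀ t, 0 < t → ‖F t‖ ≤ 1 := fun t ht => by
    rw [Real.norm_of_nonneg (h01 t (le_of_lt ht)).1]; exact (h01 t (le_of_lt ht)).2
  refine (setIntegral_pos_iff_support_of_nonneg_ae ?_ (lap_integrable h_meas h01' hlam)).2 ?_
  · refine (ae_restrict_iff' measurableSet_Ioi).2 (Eventually.of_forall fun t ht => ?_)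
    exact mul_nonneg (le_of_lt (Real.exp_pos _)) (h01 t (le_of_lt ht)).1
  · have hsub : Ioi (0:ℝ) ⊆ Function.support (fun t => Real.exp (-lam * t) * F t) := by
      intro t ht
      exact ne_of_gt (mul_pos (Real.exp_pos _) (h_pos t (le_of_lt ht)))
    have : Function.support (fun t => Real.exp (-lam * t) * F t) ∩ Ioi 0 = Ioi 0 :=
      Set.inter_eq_self_of_subset_right hsub
    rw [this]
    simp

include h_meas h01 in
lemma exists_c (h_pos : ∀ t, 0 ≤ t → 0 < F t)
    (h_conv : ∀ t : ℝ, 0 ≤ t → ∫ u in (0:ℝ)..t, F u * F (t - u) = t * F t) :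
    ∃ c : ℝ, ∀ lam : ℝ, 0 < lam →
      ∫ t in Ioi (0:ℝ), Real.exp (-lam * t) * F t = (lam + c)⁻¹ := by
  have h01' : ∀ t, 0 < t → ‖F t‖ ≤ 1 := fun t ht => by
    rw [Real.norm_of_nonneg (h01 t (le_of_lt ht)).1]; exact (h01 t (le_of_lt ht)).2
  set f : ℝ → ℝ := fun l => ∫ t in Ioi (0:ℝ), Real.exp (-l * t) * F t with hf
  have hfpos : ∀ l, 0 < l → 0 < f l := fun l hl => lap_pos h_meas h01 hl h_pos
  set g : ℝ → ℝ := fun l => (f l)⁻¹ - l with hg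
  have hgderiv : ∀ l, 0 < l → HasDerivAt g 0 l := by
    intro l hl
    have hfd := lap_deriv h_meas h01' hl
    have h2 : -∫ t in Ioi (0:ℝ), t * (Real.exp (-l * t) * F t) = -(f l * f l) := by
      rw [lap_conv h_meas h01 h_conv hl]
    rw [h2] at hfd
    have hne : f l ≠ 0 := ne_of_gt (hfpos l hl)
    have hinv := hfd.inv hne
    have hsub := hinv.sub (hasDerivAt_id l)
    have hval : - -(f l * f l) / (f l) ^ 2 - 1 = 0 := by
      rw [neg_neg, show f l * f l = (f l) ^ 2 by ring, div_self (pow_ne_zero 2 hne)]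
      ring
    rw [← hval]
    exact hsub
  have hconst : ∀ a b : ℝ, 0 < a → a < b → g a = g b := by
    intro a b ha hab
    have hcont : ContinuousOn g (Icc a b) := fun x hx =>
      (hgderiv x (lt_of_lt_of_le ha hx.1)).continuousAt.continuousWithinAt
    obtain ⟨x, hx, h0⟩ := exists_hasDerivAt_eq_slope g (fun _ => 0) hab hcont
      (fun x hx => hgderiv x (lt_of_lt_of_le ha (le_of_lt hx.1)))
    have hba : b - a ≠ 0 := ne_of_gt (by linarith)
    have := h0.symm
    rw [div_eq_zero_iff] at this
    rcases this with h | h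
    · linarith [sub_eq_zero.1 h]
    · exact absurd h hba
  refine ⟨g 1, fun lam hlam => ?_⟩
  have hgl : g lam = g 1 := by
    rcases lt_trichotomy lam 1 with h | h | h
    · exact hconst lam 1 hlam h
    · rw [h]
    · exact (hconst 1 lam one_pos h).symm
  have h1 : (f lam)⁻¹ = lam + g 1 := by
    have : (f lam)⁻¹ - lam = g 1 := hgl
    linarith
  have hne : f lam ≠ 0 := ne_of_gt (hfpos lam hlam)
  rw [show (∫ t in Ioi (0:ℝ), Real.exp (-lam * t) * F t) = f lam from rfl,
    ← inv_inv (f lam), h1]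

include h_meas h01 in
lemma c_pos (h_pos : ∀ t, 0 ≤ t → 0 < F t) (h_anti : AntitoneOn F (Set.Ici 0))
    (h_lt1 : F 1 < 1) {c : ℝ}
    (hc : ∀ lam : ℝ, 0 < lam →
      ∫ t in Ioi (0:ℝ), Real.exp (-lam * t) * F t = (lam + c)⁻¹) :
    0 < c := by
  have h01' : ∀ t, 0 < t → ‖F t‖ ≤ 1 := fun t ht => by
    rw [Real.norm_of_nonneg (h01 t (le_of_lt ht)).1]; exact (h01 t (le_of_lt ht)).2
  have hsum : ∀ lam : ℝ, 0 < lam → 0 < lam + c := by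
    intro lam hlam
    have := lap_pos h_meas h01 hlam h_pos
    rw [hc lam hlam] at this
    exact inv_pos.1 this
  have hcn : 0 ≤ c := by
    by_contra hneg
    push_neg at hneg
    have := hsum (-c / 2) (by linarith)
    linarith
  rcases lt_or_eq_of_le hcn with h | h
  · exact h
  exfalso
  have hc0 : c = 0 := h.symm
  -- the Laplace transform of 1 - F vanishes, contradiction
  have hint1 : IntegrableOn (fun t => Real.exp (-1 * t)) (Ioi (0:ℝ)) :=
    exp_neg_integrableOn_Ioi 0 one_pos
  have hintF : IntegrableOn (fun t => Real.exp (-1 * t) * F t) (Ioi (0:ℝ)) :=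
    lap_integrable h_meas h01' one_pos
  have hzero : ∫ t in Ioi (0:ℝ), (Real.exp (-1 * t) - Real.exp (-1 * t) * F t) = 0 := by
    rw [MeasureTheory.integral_sub hint1 hintF, aux_int_exp_val one_pos 0, hc 1 one_pos, hc0]
    norm_num
  have hmono : ∫ t in Ioi (1:ℝ), (Real.exp (-1 * t) - Real.exp (-1 * t) * F t)
      ≤ ∫ t in Ioi (0:ℝ), (Real.exp (-1 * t) - Real.exp (-1 * t) * F t) := by
    refine setIntegral_mono_set (hint1.sub hintF) ?_ ?_
    · refine (ae_restrict_iff' measurableSet_Ioi).2 (Eventually.of_forall fun t ht => ?_)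
      have := (h01 t (le_of_lt ht)).2
      have he := Real.exp_pos (-1 * t)
      simp only [Pi.zero_apply]
      nlinarith
    · exact HasSubset.Subset.eventuallyLE (Ioi_subset_Ioi (by norm_num))
  have hlb : (1 - F 1) * ∫ t in Ioi (1:ℝ), Real.exp (-1 * t)
      ≤ ∫ t in Ioi (1:ℝ), (Real.exp (-1 * t) - Real.exp (-1 * t) * F t) := by
    rw [← MeasureTheory.integral_const_mul]
    refine setIntegral_mono_on
      ((MeasureTheory.IntegrableOn.mono_set hint1 (Ioi_subset_Ioi (by norm_num))).const_mul _)
      (MeasureTheory.IntegrableOn.mono_set (hint1.sub hintF) (Ioi_subset_Ioi (by norm_num)))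
      measurableSet_Ioi ?_
    intro t ht
    have hFle : F t ≤ F 1 := h_anti (by norm_num : (1:ℝ) ∈ Ici (0:ℝ))
      (mem_Ici.2 (le_of_lt (lt_trans one_pos (mem_Ioi.1 ht)))) (le_of_lt (mem_Ioi.1 ht))
    have he := Real.exp_pos (-1 * t)
    nlinarith
  have hval : ∫ t in Ioi (1:ℝ), Real.exp (-1 * t) = Real.exp (-1 * 1) / 1 :=
    aux_int_exp_val one_pos 1
  have hpos1 : 0 < (1 - F 1) * ∫ t in Ioi (1:ℝ), Real.exp (-1 * t) := by
    rw [hval]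
    exact mul_pos (by linarith) (by positivity)
  linarith

end Main

/-- If the tail function `F` satisfies the convolution identity
`∫_0^t F(u)F(t-u) du = t F(t)` for all `t ≥ 0`, then it is exponential,
with rate the reciprocal of the mean. -/
theorem stmt_7 (F : ℝ → ℝ)
    (h_meas : Measurable F)
    (h_anti : AntitoneOn F (Set.Ici 0))
    (h_rc : ∀ x ∈ Set.Ici (0:ℝ), ContinuousWithinAt F (Set.Ici x) x)
    (h_pos : ∀ t ∈ Set.Ici (0:ℝ), 0 < F t)
    (h_le1 : ∀ t ∈ Set.Ici (0:ℝ), F t ≤ 1)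
    (h_lt1 : ∀ r : ℝ, 0 < r → F r < 1)
    (h_conv : ∀ t : ℝ, 0 ≤ t → ∫ u in (0:ℝ)..t, F u * F (t - u) = t * F t) :
    ∃ lam : ℝ, 0 < lam ∧ (∀ t : ℝ, 0 ≤ t → F t = Real.exp (-lam * t)) ∧
      lam = (∫ t in Set.Ioi (0:ℝ), F t)⁻¹ := by
  have h01 : ∀ t, 0 ≤ t → 0 ≤ F t ∧ F t ≤ 1 :=
    fun t ht => ⟨le_of_lt (h_pos t ht), h_le1 t ht⟩
  have h01' : ∀ t, 0 < t → ‖F t‖ ≤ 1 := fun t ht => by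
    rw [Real.norm_of_nonneg (h01 t (le_of_lt ht)).1]; exact (h01 t (le_of_lt ht)).2
  have hpos' : ∀ t, 0 ≤ t → 0 < F t := fun t ht => h_pos t ht
  obtain ⟨c, hc⟩ := exists_c h_meas h01 hpos' h_conv
  have hcpos : 0 < c := c_pos h_meas h01 hpos' h_anti (h_lt1 1 one_pos) hc
  set Φ : ℝ → ℝ := fun t => ∫ u in Ioc (0:ℝ) t, F u with hΦ
  have hΦcont : Continuous Φ := (phi_lip h_meas h01).continuous
  have hΦnonneg : ∀ t, 0 ≤ Φ t := fun t =>
    setIntegral_nonneg measurableSet_Ioc fun u hu => (h01 u (le_of_lt hu.1)).1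
  -- upper bound Φ ≤ c⁻¹
  have hΦle : ∀ t : ℝ, Φ t ≤ c⁻¹ := by
    intro t
    rcases le_or_gt t 0 with hle | hgt
    · have : Φ t = 0 := by
        rw [hΦ]
        show ∫ u in Ioc (0:ℝ) t, F u = 0
        rw [Ioc_eq_empty (by simpa using hle)]
        simp
      rw [this]
      positivity
    · have key : ∀ lam : ℝ, 0 < lam → Φ t ≤ Real.exp (lam * t) * (lam + c)⁻¹ := by
        intro lam hlam
        have h1 : Real.exp (-lam * t) * Φ t
            = ∫ u in Ioc (0:ℝ) t, Real.exp (-lam * t) * F u :=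
          (MeasureTheory.integral_const_mul _ _).symm
        have h2 : ∫ u in Ioc (0:ℝ) t, Real.exp (-lam * t) * F u
            ≤ ∫ u in Ioc (0:ℝ) t, Real.exp (-lam * u) * F u := by
          refine setIntegral_mono_on ((F_intOn h_meas h01 le_rfl).const_mul _)
            (MeasureTheory.IntegrableOn.mono_set (lap_integrable h_meas h01' hlam)
              Ioc_subset_Ioi_self) measurableSet_Ioc ?_
          intro u hu
          have hexp : Real.exp (-lam * t) ≤ Real.exp (-lam * u) := by
            apply Real.exp_le_exp.2
            nlinarith [hu.2]
          exact mul_le_mul_of_nonneg_right hexp (h01 u (le_of_lt hu.1)).1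
        have h3 : ∫ u in Ioc (0:ℝ) t, Real.exp (-lam * u) * F u
            ≤ ∫ u in Ioi (0:ℝ), Real.exp (-lam * u) * F u := by
          refine setIntegral_mono_set (lap_integrable h_meas h01' hlam) ?_ ?_
          · refine (ae_restrict_iff' measurableSet_Ioi).2 (Eventually.of_forall fun u hu => ?_)
            simp only [Pi.zero_apply]
            exact mul_nonneg (le_of_lt (Real.exp_pos _)) (h01 u (le_of_lt hu)).1
          · exact HasSubset.Subset.eventuallyLE Ioc_subset_Ioi_self
        have h4 : Real.exp (-lam * t) * Φ t ≤ (lam + c)⁻¹ := by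
          rw [h1, ← hc lam hlam]
          exact le_trans h2 h3
        have h5 : Φ t = Real.exp (lam * t) * (Real.exp (-lam * t) * Φ t) := by
          rw [← mul_assoc, ← Real.exp_add]
          simp
        rw [h5]
        exact mul_le_mul_of_nonneg_left h4 (le_of_lt (Real.exp_pos _))
      have htend : Tendsto (fun lam : ℝ => Real.exp (lam * t) * (lam + c)⁻¹)
          (𝓝[>] (0:ℝ)) (𝓝 c⁻¹) := by
        have hct : ContinuousAt (fun lam : ℝ => Real.exp (lam * t) * (lam + c)⁻¹) 0 := by
          apply ContinuousAt.mul
          · exact (Real.continuous_exp.comp (continuous_id.mul continuous_const)).continuousAt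
          · exact ((continuous_id.add continuous_const).continuousAt).inv₀
              (by simpa using ne_of_gt hcpos)
        have h6 := hct.tendsto
        simp only [zero_mul, Real.exp_zero, one_mul, zero_add] at h6
        exact tendsto_nhdsWithin_of_tendsto_nhds h6
      exact ge_of_tendsto htend
        (eventually_nhdsWithin_of_forall fun lam hlam => key lam hlam)
  set e : ℝ → ℝ := fun s => (1 - Real.exp (-c * s)) / c with he
  set h : ℝ → ℝ := fun t => Φ t - e t with hh
  have heB : ∀ s : ℝ, 0 ≤ s → 0 ≤ e s ∧ e s ≤ c⁻¹ := by
    intro s hs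
    have h1 : Real.exp (-c * s) ≤ 1 := Real.exp_le_one_iff.2 (by nlinarith)
    have h2 : (0:ℝ) < Real.exp (-c * s) := Real.exp_pos _
    constructor
    · show 0 ≤ (1 - Real.exp (-c * s)) / c
      apply div_nonneg <;> linarith
    · show (1 - Real.exp (-c * s)) / c ≤ c⁻¹
      rw [div_le_iff₀ hcpos]
      have h3 : c⁻¹ * c = 1 := inv_mul_cancel₀ (ne_of_gt hcpos)
      linarith
  have hb : ∀ t : ℝ, 0 ≤ t → |h t| ≤ c⁻¹ := by
    intro t ht
    rw [abs_le]
    have h1 := hΦnonneg t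
    have h2 := (heB t ht).2
    have h3 := hΦle t
    have h4 := (heB t ht).1
    constructor
    · show -c⁻¹ ≤ Φ t - e t
      linarith
    · show Φ t - e t ≤ c⁻¹
      linarith
  have hecont : Continuous e := by
    apply Continuous.div_const
    exact continuous_const.sub (Real.continuous_exp.comp (continuous_const.mul continuous_id))
  have hhcont : Continuous h := hΦcont.sub hecont
  have hΦmeas : Measurable Φ := hΦcont.measurable
  have hintΦ : ∀ lam : ℝ, 0 < lam →
      IntegrableOn (fun t => Real.exp (-lam * t) * Φ t) (Ioi (0:ℝ)) := by
    intro lam hlam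
    refine Integrable.mono' ((exp_neg_integrableOn_Ioi 0 hlam).const_mul c⁻¹) ?_ ?_
    · exact ((measurable_id.const_mul (-lam)).exp.mul hΦmeas).aestronglyMeasurable
    · refine (ae_restrict_iff' measurableSet_Ioi).2 (Eventually.of_forall fun t ht => ?_)
      have h1 := hΦnonneg t
      have h2 := hΦle t
      rw [norm_mul, Real.norm_of_nonneg (le_of_lt (Real.exp_pos _)),
        Real.norm_of_nonneg h1, mul_comm (c⁻¹)]
      exact mul_le_mul_of_nonneg_left h2 (le_of_lt (Real.exp_pos _))
  have hinte : ∀ lam : ℝ, 0 < lam →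
      IntegrableOn (fun t => Real.exp (-lam * t) * e t) (Ioi (0:ℝ)) := by
    intro lam hlam
    refine Integrable.mono' ((exp_neg_integrableOn_Ioi 0 hlam).const_mul c⁻¹) ?_ ?_
    · exact ((measurable_id.const_mul (-lam)).exp.mul hecont.measurable).aestronglyMeasurable
    · refine (ae_restrict_iff' measurableSet_Ioi).2 (Eventually.of_forall fun t ht => ?_)
      have h1 := (heB t (le_of_lt ht)).1
      have h2 := (heB t (le_of_lt ht)).2
      rw [norm_mul, Real.norm_of_nonneg (le_of_lt (Real.exp_pos _)),
        Real.norm_of_nonneg h1, mul_comm (c⁻¹)]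
      exact mul_le_mul_of_nonneg_left h2 (le_of_lt (Real.exp_pos _))
  have hlapzero : ∀ lam : ℝ, 0 < lam → ∫ t in Ioi (0:ℝ), Real.exp (-lam * t) * h t = 0 := by
    intro lam hlam
    have hlamc : (0:ℝ) < lam + c := by linarith
    have hsplit : ∫ t in Ioi (0:ℝ), Real.exp (-lam * t) * h t
        = (∫ t in Ioi (0:ℝ), Real.exp (-lam * t) * Φ t)
          - ∫ t in Ioi (0:ℝ), Real.exp (-lam * t) * e t := by
      rw [← MeasureTheory.integral_sub (hintΦ lam hlam) (hinte lam hlam)]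
      refine setIntegral_congr_fun measurableSet_Ioi fun t _ => ?_
      show Real.exp (-lam * t) * (Φ t - e t) = _
      ring
    have h1 : ∫ t in Ioi (0:ℝ), Real.exp (-lam * t) * Φ t = (lam + c)⁻¹ / lam := by
      rw [lap_phi h_meas h01 hlam, hc lam hlam]
    have h2 : ∫ t in Ioi (0:ℝ), Real.exp (-lam * t) * e t
        = (Real.exp (-lam * 0) / lam - Real.exp (-(lam + c) * 0) / (lam + c)) / c := by
      have hptw : ∀ t : ℝ, t ∈ Ioi (0:ℝ) → Real.exp (-lam * t) * e t
          = (Real.exp (-lam * t) - Real.exp (-(lam + c) * t)) / c := by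
        intro t _
        show Real.exp (-lam * t) * ((1 - Real.exp (-c * t)) / c) = _
        have hexp : Real.exp (-lam * t) * Real.exp (-c * t) = Real.exp (-(lam + c) * t) := by
          rw [← Real.exp_add]; ring_nf
        rw [mul_div_assoc']
        congr 1
        rw [mul_sub, mul_one, hexp]
      rw [setIntegral_congr_fun measurableSet_Ioi hptw, MeasureTheory.integral_div,
        MeasureTheory.integral_sub (exp_neg_integrableOn_Ioi 0 hlam)
          (exp_neg_integrableOn_Ioi 0 hlamc),
        aux_int_exp_val hlam 0, aux_int_exp_val hlamc 0]
    rw [hsplit, h1, h2]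
    simp only [mul_zero, neg_zero, Real.exp_zero, zero_mul]
    rw [div_sub_div _ _ (ne_of_gt hlam) (ne_of_gt hlamc)]
    field_simp
    ring
  set K : ℝ → ℝ := fun x => if 0 < x then x * h (-Real.log x) else 0 with hK
  have hKval : ∀ t : ℝ, K (Real.exp (-t)) = Real.exp (-t) * h t := by
    intro t
    show (if 0 < Real.exp (-t) then Real.exp (-t) * h (-Real.log (Real.exp (-t))) else 0) = _
    rw [if_pos (Real.exp_pos _), Real.log_exp, neg_neg]
  have hmom : ∀ n : ℕ, ∫ x in Icc (0:ℝ) 1, x ^ n * K x = 0 := by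
    intro n
    rw [MeasureTheory.integral_Icc_eq_integral_Ioo]
    calc ∫ x in Ioo (0:ℝ) 1, x ^ n * K x
        = ∫ t in Ioi (0:ℝ), Real.exp (-((n:ℝ)+2) * t) * h t := cv_moment h n
      _ = 0 := hlapzero ((n:ℝ)+2) (by positivity)
  have hKcont : ContinuousOn K (Icc 0 1) := by
    intro x hx
    rcases eq_or_lt_of_le hx.1 with h0 | h0
    · -- x = 0
      have hK0 : K 0 = 0 := by
        show (if (0:ℝ) < 0 then (0:ℝ) * h (-Real.log 0) else 0) = 0
        rw [if_neg (lt_irrefl 0)]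
      have hbound : ∀ y ∈ Icc (0:ℝ) 1, -(c⁻¹ * y) ≤ K y ∧ K y ≤ c⁻¹ * y := by
        intro y hy
        rcases eq_or_lt_of_le hy.1 with hy0 | hy0
        · rw [← hy0, hK0]
          simp
        · have hlog : 0 ≤ -Real.log y := by
            have := Real.log_nonpos (le_of_lt hy0) hy.2
            linarith
          have hKy : K y = y * h (-Real.log y) := by
            show (if 0 < y then y * h (-Real.log y) else 0) = _
            rw [if_pos hy0]
          have habs := hb (-Real.log y) hlog
          rw [abs_le] at habs
          constructor
          · rw [hKy]; nlinarith [habs.1]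
          · rw [hKy]; nlinarith [habs.2]
      have hzt : Tendsto (fun y : ℝ => c⁻¹ * y) (𝓝[Icc (0:ℝ) 1] 0) (𝓝 0) := by
        have : Tendsto (fun y : ℝ => c⁻¹ * y) (𝓝 (0:ℝ)) (𝓝 (c⁻¹ * 0)) :=
          (continuous_const.mul continuous_id).tendsto 0
        rw [mul_zero] at this
        exact tendsto_nhdsWithin_of_tendsto_nhds this
      have hzt' : Tendsto (fun y : ℝ => -(c⁻¹ * y)) (𝓝[Icc (0:ℝ) 1] 0) (𝓝 0) := by
        simpa using hzt.neg
      rw [← h0]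
      show ContinuousWithinAt K (Icc (0:ℝ) 1) 0
      unfold ContinuousWithinAt
      rw [hK0]
      refine tendsto_of_tendsto_of_tendsto_of_le_of_le' hzt' hzt ?_ ?_
      · exact eventually_nhdsWithin_of_forall fun y hy => (hbound y hy).1
      · exact eventually_nhdsWithin_of_forall fun y hy => (hbound y hy).2
    · -- 0 < x
      have hx' : ContinuousAt (fun y : ℝ => y * h (-Real.log y)) x := by
        refine ContinuousAt.mul continuousAt_id ?_
        exact hhcont.continuousAt.comp ((Real.continuousAt_log (ne_of_gt h0)).neg)
      have hev : K =ᶠ[𝓝 x] fun y : ℝ => y * h (-Real.log y) := by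
        filter_upwards [lt_mem_nhds h0] with y hy
        show (if 0 < y then y * h (-Real.log y) else 0) = _
        rw [if_pos hy]
      exact (hx'.congr hev.symm).continuousWithinAt
  have hKzero := sw_zero hKcont hmom
  have hzero : ∀ t : ℝ, 0 ≤ t → h t = 0 := by
    intro t ht
    have hx : Real.exp (-t) ∈ Icc (0:ℝ) 1 :=
      ⟨le_of_lt (Real.exp_pos _), Real.exp_le_one_iff.2 (by linarith)⟩
    have := hKzero _ hx
    rw [hKval t] at this
    have hne : Real.exp (-t) ≠ 0 := ne_of_gt (Real.exp_pos _)
    exact (mul_eq_zero.1 this).resolve_left hne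
  have hPhiEq : ∀ t : ℝ, 0 ≤ t → Φ t = e t := by
    intro t ht
    have := hzero t ht
    have h2 : Φ t - e t = 0 := this
    linarith
  -- squeeze to get F t = exp (-c t)
  have hFeq : ∀ t : ℝ, 0 ≤ t → F t = Real.exp (-c * t) := by
    intro t ht
    have hde : HasDerivAt e (Real.exp (-c * t)) t := by
      have h1 : HasDerivAt (fun s : ℝ => -c * s) (-c) t := by
        simpa using (hasDerivAt_id t).const_mul (-c)
      have h2 := ((hasDerivAt_const t (1:ℝ)).sub h1.exp).div_const c
      exact h2.congr_deriv (by rw [div_eq_iff hcpos.ne']; ring)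
    have hmap : Tendsto (fun δ : ℝ => t + δ) (𝓝[>] (0:ℝ)) (𝓝[≠] t) := by
      apply tendsto_nhdsWithin_of_tendsto_nhds_of_eventually_within
      · have h1 : Tendsto (fun δ : ℝ => t + δ) (𝓝 (0:ℝ)) (𝓝 (t + 0)) :=
          (continuous_const.add continuous_id).tendsto 0
        rw [add_zero] at h1
        exact h1.mono_left nhdsWithin_le_nhds
      · refine eventually_nhdsWithin_of_forall fun δ hδ => ?_
        have hδ' : (0:ℝ) < δ := hδ
        simp only [mem_compl_iff, mem_singleton_iff]
        intro hcontra
        linarith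
    have hslope : Tendsto (fun δ : ℝ => (e (t + δ) - e t) / δ) (𝓝[>] (0:ℝ))
        (𝓝 (Real.exp (-c * t))) := by
      have h1 := hasDerivAt_iff_tendsto_slope.1 hde
      have h2 := h1.comp hmap
      refine h2.congr fun δ => ?_
      show slope e t (t + δ) = (e (t + δ) - e t) / δ
      rw [slope_def_field, add_sub_cancel_left]
    have hFlim : Tendsto (fun δ : ℝ => F (t + δ)) (𝓝[>] (0:ℝ)) (𝓝 (F t)) := by
      have h1 : Tendsto F (𝓝[Ici t] t) (𝓝 (F t)) := h_rc t ht
      have hmap2 : Tendsto (fun δ : ℝ => t + δ) (𝓝[>] (0:ℝ)) (𝓝[Ici t] t) := by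
        apply tendsto_nhdsWithin_of_tendsto_nhds_of_eventually_within
        · have h2 : Tendsto (fun δ : ℝ => t + δ) (𝓝 (0:ℝ)) (𝓝 (t + 0)) :=
            (continuous_const.add continuous_id).tendsto 0
          rw [add_zero] at h2
          exact h2.mono_left nhdsWithin_le_nhds
        · exact eventually_nhdsWithin_of_forall fun δ hδ => by
            have : (0:ℝ) < δ := hδ
            show t ≤ t + δ
            linarith
      exact h1.comp hmap2
    have hq : ∀ δ : ℝ, 0 < δ →
        F (t + δ) ≤ (e (t + δ) - e t) / δ ∧ (e (t + δ) - e t) / δ ≤ F t := by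
      intro δ hδ
      have htd : 0 ≤ t + δ := by linarith
      have hPhidiff : Φ (t + δ) - Φ t = ∫ u in Ioc t (t + δ), F u :=
        phi_diff h_meas h01 ht (by linarith)
      have heq : e (t + δ) - e t = ∫ u in Ioc t (t + δ), F u := by
        rw [← hPhiEq t ht, ← hPhiEq (t + δ) htd]
        exact hPhidiff
      have hvol : (volume (Ioc t (t + δ))).toReal = δ := by
        rw [Real.volume_Ioc, add_sub_cancel_left, ENNReal.toReal_ofReal (le_of_lt hδ)]
      have hFint : IntegrableOn F (Ioc t (t + δ)) := F_intOn h_meas h01 ht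
      have hlow : δ * F (t + δ) ≤ ∫ u in Ioc t (t + δ), F u := by
        have h3 : ∫ _u in Ioc t (t + δ), F (t + δ) ≤ ∫ u in Ioc t (t + δ), F u := by
          refine setIntegral_mono_on (integrableOn_const (hs := measure_Ioc_lt_top.ne)) hFint
            measurableSet_Ioc ?_
          intro u hu
          exact h_anti (le_trans ht (le_of_lt hu.1) : u ∈ Ici (0:ℝ))
            (htd : t + δ ∈ Ici (0:ℝ)) hu.2
        rwa [setIntegral_const, measureReal_def, hvol, smul_eq_mul] at h3
      have hhigh : ∫ u in Ioc t (t + δ), F u ≤ δ * F t := by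
        have h3 : ∫ u in Ioc t (t + δ), F u ≤ ∫ _u in Ioc t (t + δ), F t := by
          refine setIntegral_mono_on hFint (integrableOn_const (hs := measure_Ioc_lt_top.ne))
            measurableSet_Ioc ?_
          intro u hu
          exact h_anti (ht : t ∈ Ici (0:ℝ))
            (le_trans ht (le_of_lt hu.1) : u ∈ Ici (0:ℝ)) (le_of_lt hu.1)
        rwa [setIntegral_const, measureReal_def, hvol, smul_eq_mul] at h3
      constructor
      · rw [heq, le_div_iff₀ hδ, mul_comm]
        exact hlow
      · rw [heq, div_le_iff₀ hδ, mul_comm (F t)]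
        exact hhigh
    have hle1 : F t ≤ Real.exp (-c * t) := by
      refine le_of_tendsto_of_tendsto hFlim hslope ?_
      exact eventually_nhdsWithin_of_forall fun δ hδ => (hq δ hδ).1
    have hle2 : Real.exp (-c * t) ≤ F t := by
      refine le_of_tendsto_of_tendsto hslope tendsto_const_nhds ?_
      exact eventually_nhdsWithin_of_forall fun δ hδ => (hq δ hδ).2
    linarith
  have hIF : ∫ t in Ioi (0:ℝ), F t = 1 / c := by
    rw [setIntegral_congr_fun measurableSet_Ioi
      (fun t ht => hFeq t (le_of_lt ht))]
    rw [aux_int_exp_val hcpos 0]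
    norm_num
  refine ⟨c, hcpos, fun t ht => hFeq t ht, ?_⟩
  rw [hIF, one_div, inv_inv]
end

section
/- Let $\overline{F}$ be a tail function on $[0,\infty)$ satisfying $\frac{1}{t}\int_0^t\overline{F}(u)\overline{F}(t-u)\,\mathrm{d}u\le\overline{F}(t)$ for all $t\in(0,\infty)$. Fix $t>0$ and $k\in\mathbb{N}$. Let $U_1,\ldots,U_k$ be i.i.d. uniform on $[0,t]$, and let $V_1^k,\ldots,V_{k+1}^k$ denote the successive spacings of the order statistics of $0,U_1,\ldots,U_k,t$. Then $\mathsf{E}[\,\overline{F}(V_1^k)\cdots\overline{F}(V_{k+1}^k)\,]\le\overline{F}(t)$. -/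
open MeasureTheory Finset
set_option maxHeartbeats 1000000
set_option linter.unreachableTactic false
set_option linter.unusedTactic false
open scoped ENNReal

namespace Stmt8


lemma ofFn_comp_perm {m : ℕ} (d : Fin m → ℝ) (σ : Equiv.Perm (Fin m)) :
    (List.ofFn (d ∘ σ) : Multiset ℝ) = (List.ofFn d : Multiset ℝ) := by
  rw [← Fin.univ_val_map, ← Fin.univ_val_map, ← Multiset.map_map]
  congr 1
  have : (Finset.univ.map σ.toEmbedding) = Finset.univ := Finset.map_univ_equiv σ
  calc Multiset.map (⇑σ) Finset.univ.val = (Finset.univ.map σ.toEmbedding).val := rfl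
    _ = Finset.univ.val := by rw [this]

lemma sort_eq_of_monotone_of_perm {m : ℕ} {c d : Fin m → ℝ}
    (hc : Monotone c) (hperm : (List.ofFn d : Multiset ℝ) = (List.ofFn c : Multiset ℝ)) :
    d ∘ Tuple.sort d = c := by
  have h1 : (List.ofFn (d ∘ Tuple.sort d) : Multiset ℝ) = (List.ofFn c : Multiset ℝ) := by
    rw [ofFn_comp_perm d (Tuple.sort d), hperm]
  exact List.ofFn_injective (List.Perm.eq_of_sortedLE (List.sortedLE_ofFn_iff.mpr (Tuple.monotone_sort d))
    (List.sortedLE_ofFn_iff.mpr hc) (Multiset.coe_eq_coe.mp h1))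

lemma multiset_ofFn_succAbove {m : ℕ} (f : Fin (m+1) → ℝ) (p : Fin (m+1)) :
    (List.ofFn f : Multiset ℝ) = f p ::ₘ (List.ofFn (fun j => f (p.succAbove j)) : Multiset ℝ) := by
  rw [← Fin.univ_val_map, ← Fin.univ_val_map, Fin.univ_succAbove _ p]
  rw [Finset.cons_val, Multiset.map_cons]
  congr 1
  rw [Finset.map_val, Multiset.map_map]
  rfl

lemma perm_snoc_insertNth {k : ℕ} (u : Fin k → ℝ) (x : ℝ) (i : Fin (k+1)) :
    (List.ofFn (Fin.snoc u x : Fin (k+1) → ℝ) : Multiset ℝ)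
      = (List.ofFn (i.insertNth x (u ∘ Tuple.sort u)) : Multiset ℝ) := by
  rw [multiset_ofFn_succAbove _ (Fin.last k), multiset_ofFn_succAbove (i.insertNth x (u ∘ Tuple.sort u)) i]
  simp [Fin.succAbove_last, Fin.insertNth_apply_succAbove]
  exact Multiset.coe_eq_coe.mp (ofFn_comp_perm u (Tuple.sort u)).symm

lemma sorted_snoc {k : ℕ} (u : Fin k → ℝ) (x : ℝ) (i : Fin (k+1))
    (hmono : Monotone (i.insertNth x (u ∘ Tuple.sort u))) :
    (Fin.snoc u x : Fin (k+1) → ℝ) ∘ Tuple.sort (Fin.snoc u x) = i.insertNth x (u ∘ Tuple.sort u) :=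
  sort_eq_of_monotone_of_perm hmono (perm_snoc_insertNth u x i)



/-- ℕ-indexed version of `Fin.cons 0 (Fin.snoc w t)`. -/
def pt (t : ℝ) {k : ℕ} (w : Fin k → ℝ) (j : ℕ) : ℝ :=
  if _h0 : j = 0 then 0 else if h : j ≤ k then w ⟨j-1, by omega⟩ else t

lemma cons_snoc_eval {k : ℕ} (w : Fin k → ℝ) (t : ℝ) (m : Fin (k+2)) :
    (Fin.cons 0 (Fin.snoc w t) : Fin (k+2) → ℝ) m = pt t w m.val := by
  induction m using Fin.cases with
  | zero => simp [pt]
  | succ j =>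
    rw [Fin.cons_succ]
    rcases Nat.lt_or_ge j.val k with h | h
    · have hj : j = Fin.castSucc ⟨j.val, h⟩ := by ext; simp
      rw [hj, Fin.snoc_castSucc]
      simp only [pt, Fin.val_succ]
      rw [dif_neg (by omega), dif_pos (by omega)]
      congr 1
    · have hj : j = Fin.last k := by ext; simp; omega
      rw [hj, Fin.snoc_last]
      simp only [pt, Fin.val_succ, Fin.val_last]
      rw [dif_neg (by omega), dif_neg (by omega)]

lemma insertNth_eval {k : ℕ} (w : Fin k → ℝ) (x : ℝ) (i : Fin (k+1)) (m : Fin (k+1)) :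
    (i.insertNth x w : Fin (k+1) → ℝ) m = if h1 : m.val < i.val then w ⟨m.val, by omega⟩
      else if h2 : m.val = i.val then x else w ⟨m.val - 1, by omega⟩ := by
  rcases lt_trichotomy m i with h | h | h
  · rw [Fin.insertNth_apply_below h, dif_pos (show (m:ℕ) < (i:ℕ) from h)]
    simp only [eq_rec_constant]
    exact congrArg w (Fin.ext (by simp))
  · subst h
    rw [Fin.insertNth_apply_same, dif_neg (by omega), dif_pos rfl]
  · have h' : (i:ℕ) < (m:ℕ) := h
    rw [Fin.insertNth_apply_above h, dif_neg (by omega), dif_neg (by omega)]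
    simp only [eq_rec_constant]
    exact congrArg w (Fin.ext (by simp [Fin.coe_pred]))

lemma insertNth_monotone {k : ℕ} (w : Fin k → ℝ) (hw : Monotone w) (x : ℝ) (i : Fin (k+1))
    (hlo : ∀ h : 0 < i.val, w ⟨i.val - 1, by omega⟩ ≤ x)
    (hhi : ∀ h : i.val < k, x ≤ w ⟨i.val, h⟩) :
    Monotone (i.insertNth x w : Fin (k+1) → ℝ) := by
  rw [Fin.monotone_iff_le_succ]
  intro j
  have hjk : j.val < k := j.isLt
  rw [insertNth_eval, insertNth_eval]
  simp only [Fin.coe_castSucc, Fin.val_succ]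
  split_ifs with h1 h2 h3 h4 h5 h6 h7 <;>
    first
    | omega
    | exact hw (Fin.mk_le_mk.mpr (by omega))
    | exact le_trans (le_of_eq (congrArg w (Fin.ext (by simp only []; omega)))) (hlo (by omega))
    | exact le_trans (hhi (by omega)) (le_of_eq (congrArg w (Fin.ext (by simp only []; omega))))

lemma pt_insertNth {k : ℕ} (w : Fin k → ℝ) (x t : ℝ) (i : Fin (k+1)) (m : ℕ) :
    pt t (i.insertNth x w : Fin (k+1) → ℝ) m
      = if m ≤ i.val then pt t w m else if m = i.val + 1 then x else pt t w (m-1) := by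
  have hik : i.val ≤ k := by omega
  unfold pt
  rcases Nat.eq_zero_or_pos m with rfl | hm
  · simp
  rcases Nat.lt_or_ge (k+1) m with h | h
  · rw [dif_neg (by omega), dif_neg (by omega), if_neg (by omega), if_neg (by omega),
      dif_neg (by omega), dif_neg (by omega)]
  · rw [dif_neg (by omega), dif_pos (by omega), insertNth_eval]
    simp only [Fin.val_mk]
    split_ifs <;>
      first
      | rfl
      | omega
      | exact congrArg w (Fin.ext (by simp only [Fin.val_mk]; omega))



lemma pt_zero {k : ℕ} (w : Fin k → ℝ) (t : ℝ) : pt t w 0 = 0 := by simp [pt]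

lemma pt_top {k : ℕ} (w : Fin k → ℝ) (t : ℝ) : pt t w (k+1) = t := by
  unfold pt; rw [dif_neg (by omega), dif_neg (by omega)]

lemma pt_step {k : ℕ} {w : Fin k → ℝ} {t : ℝ} (hw : Monotone w)
    (h0 : ∀ j, 0 ≤ w j) (h1 : ∀ j, w j ≤ t) (ht : 0 ≤ t) (m : ℕ) :
    pt t w m ≤ pt t w (m+1) := by
  unfold pt
  split_ifs <;>
    first
    | contradiction
    | omega
    | exact le_refl _
    | exact h0 _
    | exact ht
    | exact h1 _
    | exact hw (Fin.mk_le_mk.mpr (by omega))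

lemma pt_telescope {k : ℕ} (w : Fin k → ℝ) (t : ℝ) :
    ∑ j ∈ range (k+1), (pt t w (j+1) - pt t w j) = t := by
  rw [Finset.sum_range_sub (f := pt t w), pt_top, pt_zero, sub_zero]

/-- spacing product in ℕ world -/
def SP (F : ℝ → ℝ) (t : ℝ) {k : ℕ} (w : Fin k → ℝ) : ℝ :=
  ∏ j ∈ range (k+1), F (pt t w (j+1) - pt t w j)

lemma SP_eq_finprod (F : ℝ → ℝ) (t : ℝ) {k : ℕ} (w : Fin k → ℝ) :
    (∏ n : Fin (k+1),
      F ((Fin.cons 0 (Fin.snoc w t) : Fin (k+2) → ℝ) n.succ -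
        (Fin.cons 0 (Fin.snoc w t) : Fin (k+2) → ℝ) n.castSucc)) = SP F t w := by
  unfold SP
  rw [← Fin.prod_univ_eq_prod_range (fun j => F (pt t w (j+1) - pt t w j)) (k+1)]
  exact Finset.prod_congr rfl fun n _ => by
    rw [cons_snoc_eval, cons_snoc_eval, Fin.val_succ, Fin.coe_castSucc]

lemma prod_split {K j : ℕ} (hj : j ≤ K) (P : ℕ → ℝ) :
    ∏ m ∈ range (K+1), P m
      = ((∏ m ∈ range j, P m) * ∏ m ∈ Ico (j+1) (K+1), P m) * P j := by
  rw [← Finset.prod_range_mul_prod_Ico P (show j ≤ K+1 by omega),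
    Finset.prod_eq_prod_Ico_succ_bot (by omega) P]
  ring

lemma prod_split2 {K j : ℕ} (hj : j ≤ K) (P Q : ℕ → ℝ)
    (h1 : ∀ m, m < j → Q m = P m) (h2 : ∀ m, j+2 ≤ m → Q m = P (m-1)) :
    ∏ m ∈ range (K+2), Q m
      = ((∏ m ∈ range j, P m) * ∏ m ∈ Ico (j+1) (K+1), P m) * (Q j * Q (j+1)) := by
  rw [← Finset.prod_range_mul_prod_Ico Q (show j ≤ K+2 by omega),
    Finset.prod_eq_prod_Ico_succ_bot (show j < K+2 by omega) Q,
    Finset.prod_eq_prod_Ico_succ_bot (show j+1 < K+2 by omega) Q]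
  have e1 : ∏ m ∈ range j, Q m = ∏ m ∈ range j, P m :=
    Finset.prod_congr rfl fun m hm => h1 m (mem_range.mp hm)
  have e2 : ∏ m ∈ Ico (j+2) (K+2), Q m = ∏ m ∈ Ico (j+1) (K+1), P m := by
    rw [Finset.prod_Ico_eq_prod_range, Finset.prod_Ico_eq_prod_range]
    have hc : K + 2 - (j + 2) = K + 1 - (j + 1) := by omega
    rw [hc]
    exact Finset.prod_congr rfl fun m _ => by
      rw [h2 (j+2+m) (by omega)]
      congr 1
      omega
  rw [e1, e2]
  ring

/-- the key identification: sorted spacing product after appending one point -/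
lemma SP_snoc (F : ℝ → ℝ) (t : ℝ) {k : ℕ} (u : Fin k → ℝ) (x : ℝ) (i : Fin (k+1))
    (hx1 : pt t (u ∘ Tuple.sort u) i.val ≤ x)
    (hx2 : x ≤ pt t (u ∘ Tuple.sort u) (i.val+1)) :
    SP F t ((Fin.snoc u x : Fin (k+1) → ℝ) ∘ Tuple.sort (Fin.snoc u x))
      = ((∏ m ∈ range i.val, F (pt t (u ∘ Tuple.sort u) (m+1) - pt t (u ∘ Tuple.sort u) m)) *
          ∏ m ∈ Ico (i.val+1) (k+1), F (pt t (u ∘ Tuple.sort u) (m+1) - pt t (u ∘ Tuple.sort u) m))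
        * (F (x - pt t (u ∘ Tuple.sort u) i.val) * F (pt t (u ∘ Tuple.sort u) (i.val+1) - x)) := by
  set w := u ∘ Tuple.sort u with hw
  have hwmono : Monotone w := Tuple.monotone_sort u
  have hik : i.val ≤ k := by omega
  have hmono : Monotone (i.insertNth x w : Fin (k+1) → ℝ) := by
    apply insertNth_monotone w hwmono x i
    · intro h
      calc w ⟨i.val - 1, by omega⟩ = pt t w i.val := by
            unfold pt; rw [dif_neg (by omega), dif_pos (by omega)]
        _ ≤ x := hx1
    · intro h
      calc x ≤ pt t w (i.val+1) := hx2
        _ = w ⟨i.val, h⟩ := by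
            unfold pt
            rw [dif_neg (by omega), dif_pos (by omega)]
            exact congrArg w (Fin.ext (by simp))
  rw [sorted_snoc u x i hmono]
  unfold SP
  rw [prod_split2 hik (fun m => F (pt t w (m+1) - pt t w m))
      (fun m => F (pt t (i.insertNth x w : Fin (k+1) → ℝ) (m+1)
        - pt t (i.insertNth x w : Fin (k+1) → ℝ) m))
      (fun m hm => by
        simp only [pt_insertNth]
        rw [if_pos (by omega), if_pos (by omega)])
      (fun m hm => by
        simp only [pt_insertNth]
        rw [if_neg (by omega), if_neg (by omega), if_neg (by omega), if_neg (by omega)]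
        have hmm : m - 1 + 1 = m := by omega
        have hmm2 : m + 1 - 1 = m := by omega
        rw [hmm, hmm2])]
  have eQi : F (pt t (i.insertNth x w : Fin (k+1) → ℝ) (i.val+1)
      - pt t (i.insertNth x w : Fin (k+1) → ℝ) i.val) = F (x - pt t w i.val) := by
    simp only [pt_insertNth]
    norm_num
  have eQi1 : F (pt t (i.insertNth x w : Fin (k+1) → ℝ) (i.val+1+1)
      - pt t (i.insertNth x w : Fin (k+1) → ℝ) (i.val+1)) = F (pt t w (i.val+1) - x) := by
    simp only [pt_insertNth]
    have hmm : i.val + 1 + 1 - 1 = i.val + 1 := by omega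
    rw [hmm, if_neg (by omega)]
    norm_num
  rw [eQi, eQi1]




lemma measurable_inf'' {δ α : Type*} [MeasurableSpace δ] [MeasurableSpace α] [SemilatticeInf α] [MeasurableInf₂ α]
    {ι : Type*} {s : Finset ι} (hs : s.Nonempty) {f : ι → δ → α}
    (hf : ∀ n ∈ s, Measurable (f n)) : Measurable (s.inf' hs f) :=
  Finset.inf'_induction hs _ (fun _f hf _g hg => hf.inf hg) fun n hn => hf n hn

lemma sorted_eq {k : ℕ} (u : Fin k → ℝ) (j : Fin k) :
    (u ∘ Tuple.sort u) j
      = (Finset.univ.powersetCard (j.val+1)).attach.inf'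
          (Finset.attach_nonempty_iff.mpr (Finset.powersetCard_nonempty.mpr
            (by rw [Finset.card_univ, Fintype.card_fin]; omega)))
          (fun S => S.1.sup'
            (Finset.card_pos.mp (by
              rw [(Finset.mem_powersetCard.mp S.2).2]; omega)) u) := by
  set σ := Tuple.sort u with hσ
  set w : Fin k → ℝ := u ∘ σ with hwdef
  have hwmono : Monotone w := Tuple.monotone_sort u
  apply le_antisymm
  · -- w j ≤ inf'
    apply Finset.le_inf'
    intro S _
    obtain ⟨hS, hcard⟩ := Finset.mem_powersetCard.mp S.2
    have hex : ∃ m ∈ S.1.image σ.symm, j ≤ m := by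
      by_contra hcon
      push_neg at hcon
      have hsub : S.1.image σ.symm ⊆ Finset.Iio j := fun m hm => Finset.mem_Iio.mpr (hcon m hm)
      have h1 : (S.1.image σ.symm).card = j.val + 1 := by
        rw [Finset.card_image_of_injective _ σ.symm.injective, hcard]
      have h2 := Finset.card_le_card hsub
      rw [h1, Fin.card_Iio] at h2
      omega
    obtain ⟨m, hm, hjm⟩ := hex
    obtain ⟨b, hb, rfl⟩ := Finset.mem_image.mp hm
    calc w j ≤ w (σ.symm b) := hwmono hjm
      _ = u b := by simp [hwdef]
    · exact Finset.le_sup' u hb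
  · -- inf' ≤ w j
    have hmem : (Finset.Iic j).map σ.toEmbedding ∈ Finset.univ.powersetCard (j.val+1) := by
      rw [Finset.mem_powersetCard]
      exact ⟨Finset.subset_univ _, by rw [Finset.card_map, Fin.card_Iic]⟩
    refine le_trans (Finset.inf'_le _ (Finset.mem_attach _ ⟨_, hmem⟩)) ?_
    apply Finset.sup'_le
    intro b hb
    obtain ⟨m, hm, rfl⟩ := Finset.mem_map.mp hb
    exact hwmono (Finset.mem_Iic.mp hm)

lemma measurable_sorted_coord {k : ℕ} (j : Fin k) :
    Measurable (fun u : Fin k → ℝ => (u ∘ Tuple.sort u) j) := by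
  have heq : (fun u : Fin k → ℝ => (u ∘ Tuple.sort u) j)
      = fun u => (Finset.univ.powersetCard (j.val+1)).attach.inf'
          (Finset.attach_nonempty_iff.mpr (Finset.powersetCard_nonempty.mpr
            (by rw [Finset.card_univ, Fintype.card_fin]; omega)))
          (fun S => S.1.sup'
            (Finset.card_pos.mp (by
              rw [(Finset.mem_powersetCard.mp S.2).2]; omega)) u) := funext fun u => sorted_eq u j
  rw [heq]
  have : (fun u : Fin k → ℝ => (Finset.univ.powersetCard (j.val+1)).attach.inf'
          (Finset.attach_nonempty_iff.mpr (Finset.powersetCard_nonempty.mpr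
            (by rw [Finset.card_univ, Fintype.card_fin]; omega)))
          (fun S => S.1.sup'
            (Finset.card_pos.mp (by
              rw [(Finset.mem_powersetCard.mp S.2).2]; omega)) u))
      = ((Finset.univ.powersetCard (j.val+1)).attach.inf'
          (Finset.attach_nonempty_iff.mpr (Finset.powersetCard_nonempty.mpr
            (by rw [Finset.card_univ, Fintype.card_fin]; omega)))
          (fun S => fun u : Fin k → ℝ => S.1.sup'
            (Finset.card_pos.mp (by
              rw [(Finset.mem_powersetCard.mp S.2).2]; omega)) u)) := by
    funext u
    rw [Finset.inf'_apply]
  rw [this]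
  apply measurable_inf''
  intro S _
  have : (fun u : Fin k → ℝ => S.1.sup'
      (Finset.card_pos.mp (by rw [(Finset.mem_powersetCard.mp S.2).2]; omega)) u)
      = (S.1.sup' (Finset.card_pos.mp (by rw [(Finset.mem_powersetCard.mp S.2).2]; omega))
          (fun i => fun u : Fin k → ℝ => u i)) := by
    funext u
    rw [Finset.sup'_apply]
  rw [this]
  exact Finset.measurable_sup' _ fun i _ => measurable_pi_apply i

lemma measurable_sorted_pt {k : ℕ} (t : ℝ) (m : ℕ) :
    Measurable (fun u : Fin k → ℝ => pt t (u ∘ Tuple.sort u) m) := by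
  unfold pt
  split_ifs
  · exact measurable_const
  · exact measurable_sorted_coord _
  · exact measurable_const

lemma measurable_G (F : ℝ → ℝ) (h_meas : Measurable F) (t : ℝ) (k : ℕ) :
    Measurable (fun u : Fin k → ℝ => SP F t (u ∘ Tuple.sort u)) := by
  unfold SP
  apply Finset.measurable_prod
  intro j _
  exact h_meas.comp ((measurable_sorted_pt t (j+1)).sub (measurable_sorted_pt t j))




lemma pt_le {k : ℕ} {w : Fin k → ℝ} {t : ℝ} (ht : 0 ≤ t) (h1 : ∀ j, w j ≤ t) (m : ℕ) :
    pt t w m ≤ t := by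
  unfold pt; split_ifs
  · exact ht
  · exact h1 _
  · exact le_refl t

lemma pt_nonneg {k : ℕ} {w : Fin k → ℝ} {t : ℝ} (ht : 0 ≤ t) (h0 : ∀ j, 0 ≤ w j) (m : ℕ) :
    0 ≤ pt t w m := by
  unfold pt; split_ifs
  · exact le_refl 0
  · exact h0 _
  · exact ht

lemma inner_bound {F : ℝ → ℝ} {t : ℝ} (h_meas : Measurable F)
    (h_range : ∀ x ∈ Set.Ici (0:ℝ), F x ∈ Set.Icc (0:ℝ) 1)
    (h_cond : ∀ s : ℝ, 0 < s → (∫ u in (0:ℝ)..s, F u * F (s - u)) ≤ s * F s)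
    (ht : 0 < t) {k : ℕ} (u : Fin k → ℝ) (hu : ∀ j, u j ∈ Set.Icc (0:ℝ) t) :
    (∫ x in (0:ℝ)..t, SP F t ((Fin.snoc u x : Fin (k+1) → ℝ) ∘ Tuple.sort (Fin.snoc u x)))
      ≤ t * SP F t (u ∘ Tuple.sort u) := by
  set w : Fin k → ℝ := u ∘ Tuple.sort u with hwdef
  have hwmono : Monotone w := Tuple.monotone_sort u
  have hw0 : ∀ j, 0 ≤ w j := fun j => (hu _).1
  have hwt : ∀ j, w j ≤ t := fun j => (hu _).2
  set a : ℕ → ℝ := pt t w with hadef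
  have hstep : ∀ m, a m ≤ a (m+1) := pt_step hwmono hw0 hwt ht.le
  have ha0 : ∀ m, 0 ≤ a m := pt_nonneg ht.le hw0
  have hat : ∀ m, a m ≤ t := pt_le ht.le hwt
  set P : ℕ → ℝ := fun m => F (a (m+1) - a m) with hPdef
  have hP0 : ∀ m, 0 ≤ P m := fun m =>
    (h_range _ (Set.mem_Ici.mpr (by linarith [hstep m]))).1
  have hP1 : ∀ m, P m ≤ 1 := fun m =>
    (h_range _ (Set.mem_Ici.mpr (by linarith [hstep m]))).2
  set H : ℝ → ℝ := fun x =>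
    SP F t ((Fin.snoc u x : Fin (k+1) → ℝ) ∘ Tuple.sort (Fin.snoc u x)) with hHdef
  set C : ℕ → ℝ := fun j => (∏ m ∈ range j, P m) * ∏ m ∈ Ico (j+1) (k+1), P m with hCdef
  have hC0 : ∀ j, 0 ≤ C j :=
    fun j => mul_nonneg (Finset.prod_nonneg fun m _ => hP0 m)
      (Finset.prod_nonneg fun m _ => hP0 m)
  -- Step A : identification on pieces
  have stepA : ∀ j : ℕ, (hj : j < k+1) → ∀ x ∈ Set.Icc (a j) (a (j+1)),
      H x = C j * (F (x - a j) * F (a (j+1) - x)) := by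
    intro j hj x hx
    have := SP_snoc F t u x ⟨j, hj⟩ hx.1 hx.2
    simp only [Fin.val_mk] at this
    rw [hHdef]
    simp only [this]
    rfl
  -- Step B : pieces
  have stepB : ∀ j : ℕ, j < k+1 →
      IntervalIntegrable H volume (a j) (a (j+1))
      ∧ (∫ x in (a j)..(a (j+1)), H x) ≤ C j * ((a (j+1) - a j) * P j) := by
    intro j hj
    set d : ℝ := a (j+1) - a j with hddef
    have hd0 : 0 ≤ d := by simp [hddef]; linarith [hstep j]
    set φ : ℝ → ℝ := fun x => C j * (F (x - a j) * F (a (j+1) - x)) with hφdef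
    have hφm : Measurable φ :=
      measurable_const.mul ((h_meas.comp (measurable_id.sub measurable_const)).mul
        (h_meas.comp (measurable_const.sub measurable_id)))
    have hφint : IntervalIntegrable φ volume (a j) (a (j+1)) := by
      rw [intervalIntegrable_iff]
      have hconst : Integrable (fun _ : ℝ => |C j|) (volume.restrict (Set.uIoc (a j) (a (j+1)))) := by
        rw [integrable_const_iff]
        right
        constructor
        rw [Measure.restrict_apply_univ, Set.uIoc, Real.volume_Ioc]
        exact ENNReal.ofReal_lt_top
      apply Integrable.mono' hconst hφm.aestronglyMeasurable
      rw [ae_restrict_iff' measurableSet_uIoc]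
      apply Filter.Eventually.of_forall
      intro x hx
      rw [Set.uIoc_of_le (hstep j)] at hx
      have h1 : F (x - a j) ∈ Set.Icc (0:ℝ) 1 := h_range _ (by simp; linarith [hx.1])
      have h2 : F (a (j+1) - x) ∈ Set.Icc (0:ℝ) 1 := h_range _ (by simp; linarith [hx.2])
      rw [hφdef]
      simp only [Real.norm_eq_abs, abs_mul]
      calc |C j| * (|F (x - a j)| * |F (a (j+1) - x)|)
          ≤ |C j| * (1 * 1) := by
            apply mul_le_mul_of_nonneg_left _ (abs_nonneg _)
            exact mul_le_mul (abs_le.mpr ⟨by linarith [h1.1], h1.2⟩)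
              (abs_le.mpr ⟨by linarith [h2.1], h2.2⟩) (abs_nonneg _) zero_le_one
        _ = |C j| := by ring
    have hHeqφ : Set.EqOn H φ (Set.uIcc (a j) (a (j+1))) := by
      intro x hx
      rw [Set.uIcc_of_le (hstep j)] at hx
      exact stepA j hj x hx
    have hHint : IntervalIntegrable H volume (a j) (a (j+1)) := by
      rw [intervalIntegrable_iff] at hφint ⊢
      exact hφint.congr_fun (fun x hx => (hHeqφ (Set.uIoc_subset_uIcc hx)).symm)
        measurableSet_uIoc
    refine ⟨hHint, ?_⟩
    have he1 : (∫ x in (a j)..(a (j+1)), H x) = ∫ x in (a j)..(a (j+1)), φ x :=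
      intervalIntegral.integral_congr hHeqφ
    have he2 : (∫ x in (a j)..(a (j+1)), φ x)
        = C j * ∫ x in (a j)..(a (j+1)), F (x - a j) * F (a (j+1) - x) := by
      rw [hφdef]
      exact intervalIntegral.integral_const_mul _ _
    have he3 : (∫ x in (a j)..(a (j+1)), F (x - a j) * F (a (j+1) - x))
        = ∫ y in (0:ℝ)..d, F y * F (d - y) := by
      have := intervalIntegral.integral_comp_sub_right
        (a := a j) (b := a (j+1)) (fun y => F y * F (d - y)) (a j)
      rw [sub_self] at this
      rw [← this]
      apply intervalIntegral.integral_congr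
      intro x _
      simp only [hddef]
      congr 2
      ring
    have he4 : (∫ y in (0:ℝ)..d, F y * F (d - y)) ≤ d * F d := by
      rcases eq_or_lt_of_le hd0 with h | h
      · rw [← h, intervalIntegral.integral_same]
        simp
      · exact h_cond d h
    rw [he1, he2, he3]
    have : d * F d = d * P j := by rw [hPdef]
    apply mul_le_mul_of_nonneg_left _ (hC0 j)
    calc (∫ y in (0:ℝ)..d, F y * F (d - y)) ≤ d * F d := he4
      _ = d * P j := by rw [hPdef]
  -- Step C : sum of pieces
  have stepC : (∫ x in (0:ℝ)..t, H x) = ∑ j ∈ range (k+1), ∫ x in (a j)..(a (j+1)), H x := by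
    rw [intervalIntegral.sum_integral_adjacent_intervals (fun j hj => (stepB j hj).1)]
    rw [show a 0 = 0 from pt_zero w t, show a (k+1) = t from pt_top w t]
  -- Step D : conclude
  rw [stepC]
  have hsum : ∑ j ∈ range (k+1), C j * ((a (j+1) - a j) * P j)
      = t * SP F t w := by
    have hterm : ∀ j ∈ range (k+1), C j * ((a (j+1) - a j) * P j)
        = (a (j+1) - a j) * SP F t w := by
      intro j hj
      have hj' : j ≤ k := by simpa using Nat.lt_succ_iff.mp (mem_range.mp hj)
      have : SP F t w = C j * P j := by
        rw [SP, prod_split hj' P, hCdef]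
      rw [this]
      ring
    rw [Finset.sum_congr rfl hterm, ← Finset.sum_mul, pt_telescope w t, mul_comm]
  rw [← hsum]
  exact Finset.sum_le_sum fun j hj => (stepB j (mem_range.mp hj)).2




variable {F : ℝ → ℝ} {t : ℝ}

lemma mu_prob (ht : 0 < t) :
    IsProbabilityMeasure ((ENNReal.ofReal t)⁻¹ • volume.restrict (Set.Icc (0:ℝ) t)) := by
  constructor
  rw [Measure.smul_apply, Measure.restrict_apply_univ, Real.volume_Icc, smul_eq_mul, sub_zero]
  exact ENNReal.inv_mul_cancel (by simp [ht]) ENNReal.ofReal_ne_top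

lemma ae_mem_Icc (ht : 0 < t) (k : ℕ) :
    ∀ᵐ u ∂(Measure.pi fun _ : Fin k =>
      (ENNReal.ofReal t)⁻¹ • volume.restrict (Set.Icc (0:ℝ) t)),
      ∀ j, u j ∈ Set.Icc (0:ℝ) t := by
  have h1 : ∀ᵐ x ∂((ENNReal.ofReal t)⁻¹ • volume.restrict (Set.Icc (0:ℝ) t)),
      x ∈ Set.Icc (0:ℝ) t := by
    rw [ae_iff]
    have hset : {a : ℝ | a ∉ Set.Icc (0:ℝ) t} = (Set.Icc (0:ℝ) t)ᶜ := rfl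
    rw [hset, Measure.smul_apply,
      Measure.restrict_apply (MeasurableSet.compl measurableSet_Icc),
      Set.compl_inter_self]
    simp
  haveI := mu_prob ht
  exact Filter.eventually_all.2 fun j =>
    (MeasureTheory.Measure.tendsto_eval_ae_ae).eventually h1

lemma SP_mem_Icc (h_range : ∀ x ∈ Set.Ici (0:ℝ), F x ∈ Set.Icc (0:ℝ) 1) (ht : 0 < t)
    {k : ℕ} (u : Fin k → ℝ) (hu : ∀ j, u j ∈ Set.Icc (0:ℝ) t) :
    SP F t (u ∘ Tuple.sort u) ∈ Set.Icc (0:ℝ) 1 := by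
  set w : Fin k → ℝ := u ∘ Tuple.sort u with hwdef
  have hwmono : Monotone w := Tuple.monotone_sort u
  have hstep : ∀ m, pt t w m ≤ pt t w (m+1) :=
    pt_step hwmono (fun j => (hu _).1) (fun j => (hu _).2) ht.le
  have hfac : ∀ m, F (pt t w (m+1) - pt t w m) ∈ Set.Icc (0:ℝ) 1 := fun m =>
    h_range _ (Set.mem_Ici.mpr (by linarith [hstep m]))
  constructor
  · exact Finset.prod_nonneg fun m _ => (hfac m).1
  · exact Finset.prod_le_one (fun m _ => (hfac m).1) (fun m _ => (hfac m).2)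

lemma G_integrable (h_meas : Measurable F)
    (h_range : ∀ x ∈ Set.Ici (0:ℝ), F x ∈ Set.Icc (0:ℝ) 1) (ht : 0 < t) (k : ℕ) :
    Integrable (fun u : Fin k → ℝ => SP F t (u ∘ Tuple.sort u))
      (Measure.pi fun _ : Fin k =>
        (ENNReal.ofReal t)⁻¹ • volume.restrict (Set.Icc (0:ℝ) t)) := by
  haveI := mu_prob ht
  apply Integrable.mono' (integrable_const (1:ℝ))
    (measurable_G F h_meas t k).aestronglyMeasurable
  filter_upwards [ae_mem_Icc ht k] with u hu
  have := SP_mem_Icc h_range ht u hu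
  rw [Real.norm_eq_abs, abs_le]
  exact ⟨by linarith [this.1], this.2⟩

lemma main_induction (h_meas : Measurable F)
    (h_range : ∀ x ∈ Set.Ici (0:ℝ), F x ∈ Set.Icc (0:ℝ) 1)
    (h_cond : ∀ s : ℝ, 0 < s → (∫ u in (0:ℝ)..s, F u * F (s - u)) ≤ s * F s)
    (ht : 0 < t) :
    ∀ k : ℕ, (∫ u : Fin k → ℝ, SP F t (u ∘ Tuple.sort u)
      ∂(Measure.pi fun _ : Fin k =>
        (ENNReal.ofReal t)⁻¹ • volume.restrict (Set.Icc (0:ℝ) t))) ≤ F t := by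
  haveI := mu_prob ht
  intro k
  induction k with
  | zero =>
    have hconst : (fun u : Fin 0 → ℝ => SP F t (u ∘ Tuple.sort u))
        = fun _ => F t := by
      funext u
      unfold SP
      rw [Finset.prod_range_one, pt_top (u ∘ Tuple.sort u) t, pt_zero, sub_zero]
    rw [hconst, integral_const, probReal_univ, one_smul]
  | succ k IH =>
    set μ : Measure ℝ := (ENNReal.ofReal t)⁻¹ • volume.restrict (Set.Icc (0:ℝ) t) with hμ
    set G : ∀ m : ℕ, (Fin m → ℝ) → ℝ := fun m u => SP F t (u ∘ Tuple.sort u) with hG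
    have hMP := measurePreserving_piFinSuccAbove (fun _ : Fin (k+1) => μ) (Fin.last k)
    set e := MeasurableEquiv.piFinSuccAbove (fun _ : Fin (k+1) => ℝ) (Fin.last k) with he
    have hGint : Integrable (G (k+1)) (Measure.pi fun _ : Fin (k+1) => μ) :=
      G_integrable h_meas h_range ht (k+1)
    have hsymm : MeasurePreserving e.symm (μ.prod (Measure.pi fun _ : Fin k => μ))
        (Measure.pi fun _ : Fin (k+1) => μ) := hMP.symm e
    have h1 : (∫ u : Fin (k+1) → ℝ, G (k+1) u ∂(Measure.pi fun _ : Fin (k+1) => μ))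
        = ∫ p : ℝ × (Fin k → ℝ), G (k+1) (e.symm p)
            ∂(μ.prod (Measure.pi fun _ : Fin k => μ)) :=
      (hsymm.integral_comp e.symm.measurableEmbedding _).symm
    have hint2 : Integrable (fun p : ℝ × (Fin k → ℝ) => G (k+1) (e.symm p))
        (μ.prod (Measure.pi fun _ : Fin k => μ)) :=
      (hsymm.integrable_comp_emb e.symm.measurableEmbedding).mpr hGint
    have hsnoc : ∀ (x : ℝ) (v : Fin k → ℝ), e.symm (x, v) = Fin.snoc v x := by
      intro x v
      rw [he]
      simp [MeasurableEquiv.piFinSuccAbove_symm_apply, Fin.insertNthEquiv,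
        Fin.insertNth_last']
    have h2 : (∫ p : ℝ × (Fin k → ℝ), G (k+1) (e.symm p)
          ∂(μ.prod (Measure.pi fun _ : Fin k => μ)))
        = ∫ v : Fin k → ℝ, (∫ x : ℝ, G (k+1) (Fin.snoc v x) ∂μ)
            ∂(Measure.pi fun _ : Fin k => μ) := by
      rw [integral_prod_symm _ hint2]
      congr 1
      funext v
      congr 1
      funext x
      rw [hsnoc]
    have hmarg : Integrable (fun v : Fin k → ℝ => ∫ x : ℝ, G (k+1) (e.symm (x, v)) ∂μ)
        (Measure.pi fun _ : Fin k => μ) := hint2.integral_prod_right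
    have hmarg' : Integrable (fun v : Fin k → ℝ => ∫ x : ℝ, G (k+1) (Fin.snoc v x) ∂μ)
        (Measure.pi fun _ : Fin k => μ) := by
      apply hmarg.congr
      apply Filter.Eventually.of_forall
      intro v
      simp only [hsnoc]
    have hptwise : ∀ᵐ v ∂(Measure.pi fun _ : Fin k => μ),
        (∫ x : ℝ, G (k+1) (Fin.snoc v x) ∂μ) ≤ G k v := by
      filter_upwards [ae_mem_Icc ht k] with v hv
      have hbound := inner_bound h_meas h_range h_cond ht v hv
      have heval : (∫ x : ℝ, G (k+1) (Fin.snoc v x) ∂μ)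
          = t⁻¹ * ∫ x in (0:ℝ)..t, G (k+1) (Fin.snoc v x) := by
        rw [hμ, integral_smul_measure, ENNReal.toReal_inv, ENNReal.toReal_ofReal ht.le,
          smul_eq_mul]
        congr 1
        rw [intervalIntegral.integral_of_le ht.le, ← MeasureTheory.integral_Icc_eq_integral_Ioc]
      rw [heval]
      calc t⁻¹ * ∫ x in (0:ℝ)..t, G (k+1) (Fin.snoc v x)
          ≤ t⁻¹ * (t * G k v) := by
            apply mul_le_mul_of_nonneg_left _ (by positivity)
            exact hbound
        _ = G k v := by field_simp
    calc (∫ u : Fin (k+1) → ℝ, G (k+1) u ∂(Measure.pi fun _ : Fin (k+1) => μ))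
        = ∫ v : Fin k → ℝ, (∫ x : ℝ, G (k+1) (Fin.snoc v x) ∂μ)
            ∂(Measure.pi fun _ : Fin k => μ) := h1.trans h2
      _ ≤ ∫ v : Fin k → ℝ, G k v ∂(Measure.pi fun _ : Fin k => μ) :=
          integral_mono_ae hmarg' (G_integrable h_meas h_range ht k) hptwise
      _ ≤ F t := IH


end Stmt8


open MeasureTheory
open scoped ENNReal

/-- If `(1/t)∫_0^t F(u)F(t-u) du ≤ F(t)` for all `t > 0`, then for i.i.d. uniforms
`U_1,…,U_k` on `[0,t]` the expected product of `F` over the spacings of the order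
statistics of `0,U_1,…,U_k,t` is at most `F(t)`. -/
theorem stmt_8 (F : ℝ → ℝ)
    (h_meas : Measurable F)
    (h_anti : AntitoneOn F (Set.Ici 0))
    (h_range : ∀ x ∈ Set.Ici (0:ℝ), F x ∈ Set.Icc (0:ℝ) 1)
    (h_cond : ∀ s : ℝ, 0 < s → (∫ u in (0:ℝ)..s, F u * F (s - u)) ≤ s * F s)
    (t : ℝ) (ht : 0 < t) (k : ℕ) :
    (∫ u : Fin k → ℝ,
        ∏ n : Fin (k + 1),
          F ((Fin.cons 0 (Fin.snoc (u ∘ Tuple.sort u) t) : Fin (k + 2) → ℝ) n.succ -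
            (Fin.cons 0 (Fin.snoc (u ∘ Tuple.sort u) t) : Fin (k + 2) → ℝ) n.castSucc)
        ∂(Measure.pi fun _ : Fin k => (ENNReal.ofReal t)⁻¹ • volume.restrict (Set.Icc 0 t)))
      ≤ F t := by
  have heq : (fun u : Fin k → ℝ =>
      ∏ n : Fin (k + 1),
        F ((Fin.cons 0 (Fin.snoc (u ∘ Tuple.sort u) t) : Fin (k + 2) → ℝ) n.succ -
          (Fin.cons 0 (Fin.snoc (u ∘ Tuple.sort u) t) : Fin (k + 2) → ℝ) n.castSucc))
      = fun u : Fin k → ℝ => Stmt8.SP F t (u ∘ Tuple.sort u) :=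
    funext fun u => Stmt8.SP_eq_finprod F t (u ∘ Tuple.sort u)
  rw [heq]
  exact Stmt8.main_induction h_meas h_range h_cond ht k
end

section
/- Let $\overline{F}$ be the tail function of a probability law $\mathcal{T}$ on $[0,\infty]$ with $\overline{F}(0)>0$ and $\overline{F}(r)<1$ for all $r>0$, and let $l\in\mathbb{N}$, $l\ge 2$. It cannot hold that $\overline{F}(x+y)=\overline{F}(x)\overline{F}(y)^l$ for all $0\le y\le x<\infty$. In other words, $\mathcal{T}$ cannot be invariant under deterministic $l$-fold reset. -/
/-- A tail function (with `F 0 > 0`, `F r < 1` for `r > 0`) cannot satisfy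
`F(x+y) = F(x) F(y)^l` for all `0 ≤ y ≤ x` when `l ≥ 2`: no invariance under
deterministic `l`-fold reset. -/
theorem stmt_14 (F : ℝ → ℝ)
    (h_anti : AntitoneOn F (Set.Ici 0))
    (h_rc : ∀ x ∈ Set.Ici (0:ℝ), ContinuousWithinAt F (Set.Ici x) x)
    (h_range : ∀ x ∈ Set.Ici (0:ℝ), F x ∈ Set.Icc (0:ℝ) 1)
    (h_pos : 0 < F 0)
    (h_lt1 : ∀ r : ℝ, 0 < r → F r < 1)
    (l : ℕ) (hl : 2 ≤ l) :
    ¬ (∀ x y : ℝ, 0 ≤ y → y ≤ x → F (x + y) = F x * F y ^ l) := by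
  intro h
  -- Step 1: F 0 = 1
  have h0 : F 0 = 1 := by
    have e := h 0 0 le_rfl le_rfl
    simp only [add_zero] at e
    have hle : F 0 ≤ 1 := (h_range 0 (by simp)).2
    by_contra hne
    have hlt : F 0 < 1 := lt_of_le_of_ne hle hne
    have : F 0 ^ l < 1 := pow_lt_one₀ h_pos.le hlt (by omega)
    nlinarith
  -- Step 2: find a > 0 with 0 < F a
  have hcont : Filter.Tendsto F (nhdsWithin 0 (Set.Ici 0)) (nhds 1) := by
    have := h_rc 0 (by simp)
    rwa [ContinuousWithinAt, h0] at this
  have hev : ∀ᶠ x in nhdsWithin 0 (Set.Ici 0), 0 < F x :=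
    hcont.eventually (eventually_gt_nhds one_pos)
  have hev' : ∀ᶠ x in nhdsWithin (0:ℝ) (Set.Ioi 0), 0 < F x :=
    hev.filter_mono (nhdsWithin_mono 0 Set.Ioi_subset_Ici_self)
  obtain ⟨a, haF, ha⟩ := (hev'.and self_mem_nhdsWithin).exists
  have ha0 : (0:ℝ) < a := ha
  -- Step 3: compute F (4a) two ways
  have h2 : F (a + a) = F a ^ (l + 1) := by
    rw [h a a ha0.le le_rfl, pow_succ, mul_comm]
  have h3 : F (a + a + a) = F a ^ (2 * l + 1) := by
    rw [h (a + a) a ha0.le (by linarith), h2, ← pow_add]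
    ring_nf
  have h4 : F (a + a + (a + a)) = F a ^ ((l + 1) * (l + 1)) := by
    rw [h (a + a) (a + a) (by linarith) le_rfl, h2, ← pow_mul, ← pow_add]
    ring_nf
  have h4' : F (a + a + a + a) = F a ^ (3 * l + 1) := by
    rw [h (a + a + a) a ha0.le (by linarith), h3, ← pow_add]
    ring_nf
  have heq : F a ^ ((l + 1) * (l + 1)) = F a ^ (3 * l + 1) := by
    rw [← h4, ← h4']
    ring_nf
  have hlt : F a ^ ((l + 1) * (l + 1)) < F a ^ (3 * l + 1) := by
    apply pow_lt_pow_right_of_lt_one₀ haF (h_lt1 a ha0) (by nlinarith)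
  linarith [heq ▸ hlt]
end

section
/- Define $\overline{F}(t)=e^{-t}\mathbf{1}_{[0,1)\cup(2,\infty)}(t)+e^{-2}\mathbf{1}_{[1,2]}(t)$ for $t\in[0,\infty)$. Then $\overline{F}(u)\overline{F}(1)\le\overline{F}(1+u)$ for all $u\in[0,\infty)$, but $\overline{F}(a)\overline{F}(1-a)>\overline{F}(1)$ for all $a\in(0,1)$. -/
/-- For the tail `F(t) = e^{-t} 1_{[0,1)∪(2,∞)}(t) + e^{-2} 1_{[1,2]}(t)`:
the lag-1 condition `F(u)F(1) ≤ F(1+u)` holds for all `u ≥ 0`, yet supermultiplicativity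
fails at level 1: `F(a)F(1-a) > F(1)` for all `a ∈ (0,1)`. -/
theorem stmt_17 (F : ℝ → ℝ)
    (hF : ∀ t : ℝ, F t = if t < 1 ∨ 2 < t then Real.exp (-t) else Real.exp (-2)) :
    (∀ u : ℝ, 0 ≤ u → F u * F 1 ≤ F (1 + u)) ∧
      (∀ a : ℝ, 0 < a → a < 1 → F 1 < F a * F (1 - a)) := by
  constructor
  · intro u hu
    have hF1 : F 1 = Real.exp (-2) := by rw [hF]; norm_num
    rw [hF1, hF u, hF (1 + u)]
    rcases lt_or_ge u 1 with h | h
    · rw [if_pos (Or.inl h), if_neg (by push_neg; constructor <;> linarith),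
        ← Real.exp_add]
      exact Real.exp_le_exp.2 (by linarith)
    · rcases le_or_gt u 2 with h2 | h2
      · rw [if_neg (by push_neg; exact ⟨h, h2⟩)]
        by_cases h3 : 2 < 1 + u
        · rw [if_pos (Or.inr h3), ← Real.exp_add]
          exact Real.exp_le_exp.2 (by linarith)
        · rw [if_neg (by push_neg; constructor <;> linarith), ← Real.exp_add]
          exact Real.exp_le_exp.2 (by linarith)
      · rw [if_pos (Or.inr h2), if_pos (Or.inr (by linarith)), ← Real.exp_add]
        exact Real.exp_le_exp.2 (by linarith)
  · intro a ha ha1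
    have hF1 : F 1 = Real.exp (-2) := by rw [hF]; norm_num
    rw [hF1, hF a, hF (1 - a)]
    rw [if_pos (Or.inl ha1), if_pos (Or.inl (by linarith)), ← Real.exp_add]
    exact Real.exp_lt_exp.2 (by linarith)
end

section
/- Let $\overline{F}$ be a tail function with $\overline{F}(0)>0$ that is supermultiplicative: $\overline{F}(x)\overline{F}(y)\le\overline{F}(x+y)$ for all $x,y\ge 0$. Then every jump of $\overline{F}$ at a point $t\in(0,\infty)$ has size at most $1-\overline{F}(0)$; i.e. $\overline{F}(t^-)-\overline{F}(t)\le 1-\overline{F}(0)$, where $\overline{F}(t^-)=\lim_{s\uparrow t}\overline{F}(s)$. In particular, if $\overline{F}(0)=1$ then $\overline{F}$ is continuous on $(0,\infty)$. -/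
/-- If the tail `F` with `F 0 > 0` is supermultiplicative, then every jump of `F` at a
point `t > 0` has size at most `1 - F 0`; in particular if `F 0 = 1` then `F` is
continuous on `(0,∞)`. -/
theorem stmt_18 (F : ℝ → ℝ)
    (h_anti : Antitone F)
    (h_rc : ∀ x ∈ Set.Ici (0:ℝ), ContinuousWithinAt F (Set.Ici x) x)
    (h_range : ∀ x ∈ Set.Ici (0:ℝ), F x ∈ Set.Icc (0:ℝ) 1)
    (h_pos : 0 < F 0)
    (h_super : ∀ x ∈ Set.Ici (0:ℝ), ∀ y ∈ Set.Ici (0:ℝ), F x * F y ≤ F (x + y)) :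
    (∀ t : ℝ, 0 < t → Function.leftLim F t - F t ≤ 1 - F 0) ∧
      (F 0 = 1 → ∀ t : ℝ, 0 < t → ContinuousAt F t) := by
  have hF0le : F 0 ≤ 1 := (h_range 0 (Set.mem_Ici.2 le_rfl)).2
  have key : ∀ t : ℝ, 0 < t → Function.leftLim F t * F 0 ≤ F t := by
    intro t ht
    have hL : Filter.Tendsto F (nhdsWithin t (Set.Iio t)) (nhds (Function.leftLim F t)) :=
      h_anti.tendsto_leftLim t
    have hsub : Filter.Tendsto (fun s => t - s) (nhdsWithin t (Set.Iio t))
        (nhdsWithin 0 (Set.Ici (0:ℝ))) := by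
      apply tendsto_nhdsWithin_of_tendsto_nhds_of_eventually_within
      · have : Filter.Tendsto (fun s => t - s) (nhds t) (nhds (t - t)) :=
          tendsto_const_nhds.sub Filter.tendsto_id
        simpa using this.mono_left nhdsWithin_le_nhds
      · filter_upwards [self_mem_nhdsWithin] with s hs
        exact Set.mem_Ici.2 (by simp only [Set.mem_Iio] at hs; linarith)
    have hR : Filter.Tendsto (fun s => F (t - s)) (nhdsWithin t (Set.Iio t)) (nhds (F 0)) :=
      (h_rc 0 (Set.mem_Ici.2 le_rfl)).tendsto.comp hsub
    have hprod : Filter.Tendsto (fun s => F s * F (t - s)) (nhdsWithin t (Set.Iio t))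
        (nhds (Function.leftLim F t * F 0)) := hL.mul hR
    have hev : ∀ᶠ s in nhdsWithin t (Set.Iio t), F s * F (t - s) ≤ F t := by
      filter_upwards [Ioo_mem_nhdsLT_of_mem (Set.mem_Ioc.2 ⟨ht, le_rfl⟩)] with s hs
      have h1 : (0:ℝ) ≤ s := hs.1.le
      have h2 : (0:ℝ) ≤ t - s := by linarith [hs.2]
      have := h_super s (Set.mem_Ici.2 h1) (t - s) (Set.mem_Ici.2 h2)
      simpa using this
    exact le_of_tendsto hprod hev
  have hLle1 : ∀ t : ℝ, 0 < t → Function.leftLim F t ≤ 1 := by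
    intro t ht
    have := h_anti.leftLim_le (show t / 2 < t by linarith)
    exact this.trans (h_range (t/2) (Set.mem_Ici.2 (by linarith : (0:ℝ) ≤ t/2))).2
  have hjump : ∀ t : ℝ, 0 < t → Function.leftLim F t - F t ≤ 1 - F 0 := by
    intro t ht
    have h1 := key t ht
    have h2 := hLle1 t ht
    nlinarith
  refine ⟨hjump, fun hF0 t ht => ?_⟩
  have h1 : Function.leftLim F t = F t := by
    have := hjump t ht
    have h2 := h_anti.le_leftLim (le_refl t)
    linarith [hF0 ▸ this]
  have h2 : Function.rightLim F t = F t :=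
    h_anti.continuousWithinAt_Ioi_iff_rightLim_eq.1
      ((h_rc t (Set.mem_Ici.2 ht.le)).mono Set.Ioi_subset_Ici_self)
  exact h_anti.continuousAt_iff_leftLim_eq_rightLim.2 (h1.trans h2.symm)
end

section
/- Let $k\in(0,\infty)$ and $l\in\mathbb{N}$, $l\ge 2$. The inequality $\int_0^1 e^{-t^k(u^k+l(1-u)^k-1)}\,\mathrm{d}u\le 1$ holds for all $t\in(0,\infty)$ if and only if $k\le 1$. -/
open MeasureTheory intervalIntegral Real

private lemma rpow_add_le_add_rpow' {x y p : ℝ} (hx : 0 ≤ x) (hy : 0 ≤ y)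
    (hp : 0 ≤ p) (hp1 : p ≤ 1) : (x + y) ^ p ≤ x ^ p + y ^ p := by
  have h := NNReal.rpow_add_le_add_rpow x.toNNReal y.toNNReal hp hp1
  have h2 : ((x.toNNReal : ℝ) + (y.toNNReal : ℝ)) ^ p ≤
      (x.toNNReal : ℝ) ^ p + (y.toNNReal : ℝ) ^ p := by exact_mod_cast h
  rwa [Real.coe_toNNReal x hx, Real.coe_toNNReal y hy] at h2

private lemma cont_aux (t k : ℝ) (hk : 0 < k) (l : ℕ) :
    Continuous fun u : ℝ => Real.exp (-(t ^ k * (u ^ k + (l : ℝ) * (1 - u) ^ k - 1))) := by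
  have h1 : Continuous fun u : ℝ => u ^ k := Real.continuous_rpow_const hk.le
  have h2 : Continuous fun u : ℝ => (1 - u) ^ k :=
    h1.comp (continuous_const.sub continuous_id)
  exact Real.continuous_exp.comp
    (continuous_const.mul ((h1.add (continuous_const.mul h2)).sub continuous_const)).neg

/-- For `l ≥ 2`, the Weibull shape-`k` law is no bigger under exponential `l`-fold reset,
i.e. `∫_0^1 e^{-t^k (u^k + l(1-u)^k - 1)} du ≤ 1` for all `t > 0`, iff `k ≤ 1`. -/
theorem stmt_19 (l : ℕ) (hl : 2 ≤ l) (k : ℝ) (hk : 0 < k) :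
    (∀ t : ℝ, 0 < t →
        (∫ u in (0:ℝ)..1,
          Real.exp (-(t ^ k * (u ^ k + (l : ℝ) * (1 - u) ^ k - 1)))) ≤ 1) ↔ k ≤ 1 := by
  set f : ℝ → ℝ → ℝ := fun t u => Real.exp (-(t ^ k * (u ^ k + (l : ℝ) * (1 - u) ^ k - 1)))
    with hf
  have hfc : ∀ t : ℝ, Continuous (f t) := fun t => cont_aux t k hk l
  have hl1 : (1 : ℝ) ≤ (l : ℝ) := by exact_mod_cast Nat.one_le_of_lt hl
  constructor
  · -- forward: if inequality holds for all t, then k ≤ 1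
    intro H
    by_contra hk1
    push_neg at hk1
    -- choose ε
    set ε : ℝ := min (1/2) ((2 * (l:ℝ))⁻¹ ^ (k - 1)⁻¹) with hε
    have hlpos : (0:ℝ) < 2 * (l:ℝ) := by positivity
    have hεpos : 0 < ε := lt_min (by norm_num) (Real.rpow_pos_of_pos (by positivity) _)
    have hεhalf : ε ≤ 1/2 := min_le_left _ _
    have hεk : ε ^ (k - 1) ≤ (2 * (l:ℝ))⁻¹ := by
      calc ε ^ (k - 1) ≤ ((2 * (l:ℝ))⁻¹ ^ (k - 1)⁻¹) ^ (k - 1) :=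
            Real.rpow_le_rpow hεpos.le (min_le_right _ _) (by linarith)
        _ = (2 * (l:ℝ))⁻¹ := Real.rpow_inv_rpow (by positivity) (sub_pos.mpr hk1).ne'
    -- key pointwise bound on [1-ε, 1-ε/2]
    have key : ∀ u ∈ Set.Icc (1 - ε) (1 - ε/2),
        u ^ k + (l : ℝ) * (1 - u) ^ k - 1 ≤ -(ε/4) := by
      intro u hu
      obtain ⟨hu1, hu2⟩ := hu
      set s : ℝ := 1 - u with hs
      have hs1 : ε/2 ≤ s := by simp [hs]; linarith
      have hs2 : s ≤ ε := by simp [hs]; linarith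
      have hspos : 0 < s := lt_of_lt_of_le (by linarith) hs1
      have hupos : 0 < u := by nlinarith
      have huk : u ^ k ≤ u := by
        have := Real.rpow_le_rpow_of_exponent_ge hupos (by linarith) (le_of_lt hk1)
        simpa using this
      have hsk : (l : ℝ) * s ^ k ≤ s / 2 := by
        have hsplit : s ^ k = s ^ (k - 1) * s := by
          rw [← Real.rpow_add_one hspos.ne' (k - 1)]; congr 1; ring
        have h1 : s ^ (k - 1) ≤ ε ^ (k - 1) :=
          Real.rpow_le_rpow hspos.le hs2 (by linarith)
        have h2 : s ^ (k - 1) ≤ (2 * (l:ℝ))⁻¹ := h1.trans hεk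
        calc (l : ℝ) * s ^ k = (l : ℝ) * (s ^ (k - 1) * s) := by rw [hsplit]
          _ ≤ (l : ℝ) * ((2 * (l:ℝ))⁻¹ * s) := by
              apply mul_le_mul_of_nonneg_left _ (by linarith)
              exact mul_le_mul_of_nonneg_right h2 hspos.le
          _ = s / 2 := by field_simp
      have : u ^ k + (l : ℝ) * (1 - u) ^ k - 1 ≤ u - 1 + s / 2 := by
        rw [← hs]; linarith
      calc u ^ k + (l : ℝ) * (1 - u) ^ k - 1 ≤ u - 1 + s / 2 := this
        _ = -(s/2) := by rw [hs]; ring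
        _ ≤ -(ε/4) := by linarith
    -- choose t
    set N : ℝ := Real.log (2/ε) + 1 with hN
    have hNpos : 0 < N := by
      have h0 : (0:ℝ) ≤ Real.log (2/ε) :=
        Real.log_nonneg (by rw [le_div_iff₀ hεpos]; linarith)
      rw [hN]; linarith
    set T : ℝ := 4 * N / ε with hT
    have hTpos : 0 < T := by positivity
    set t : ℝ := T ^ k⁻¹ with ht
    have htpos : 0 < t := Real.rpow_pos_of_pos hTpos _
    have htk : t ^ k = T := Real.rpow_inv_rpow hTpos.le hk.ne'
    -- lower bound on the subinterval
    have hab : (1 - ε : ℝ) ≤ 1 - ε/2 := by linarith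
    have hbound : ∀ u ∈ Set.Icc (1 - ε) (1 - ε/2), Real.exp N ≤ f t u := by
      intro u hu
      have h1 := key u hu
      have h2 : t ^ k * (u ^ k + (l : ℝ) * (1 - u) ^ k - 1) ≤ T * (-(ε/4)) := by
        rw [htk]; exact mul_le_mul_of_nonneg_left h1 hTpos.le
      have h3 : T * (-(ε/4)) = -N := by rw [hT]; field_simp
      apply Real.exp_le_exp.mpr
      rw [h3] at h2; linarith
    have hint1 : (ε/2) * Real.exp N ≤ ∫ u in (1-ε)..(1-ε/2), f t u := by
      have h := intervalIntegral.integral_mono_on hab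
        (_root_.intervalIntegrable_const (μ := MeasureTheory.volume) (c := Real.exp N))
        ((hfc t).intervalIntegrable _ _) hbound
      rw [intervalIntegral.integral_const] at h
      have : (1 - ε/2 - (1 - ε)) = ε/2 := by ring
      rw [this] at h
      simpa [smul_eq_mul] using h
    have hint2 : (∫ u in (1-ε)..(1-ε/2), f t u) ≤ ∫ u in (0:ℝ)..1, f t u := by
      rw [intervalIntegral.integral_of_le hab, intervalIntegral.integral_of_le (by norm_num : (0:ℝ) ≤ 1)]
      apply MeasureTheory.setIntegral_mono_set
      · exact ((hfc t).intervalIntegrable 0 1).1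
      · exact Filter.Eventually.of_forall fun u => (Real.exp_pos _).le
      · apply Filter.Eventually.of_forall
        exact Set.Ioc_subset_Ioc (by linarith) (by linarith)
    have hval : (ε/2) * Real.exp N = Real.exp 1 := by
      rw [hN, Real.exp_add, Real.exp_log (by positivity)]
      field_simp
    have he : (1:ℝ) < Real.exp 1 := by
      have := Real.exp_one_gt_d9; linarith
    have := H t htpos
    rw [hval] at hint1
    linarith
  · -- backward: k ≤ 1 implies the inequality
    intro hk1 t ht
    have hpt : 0 < t ^ k := Real.rpow_pos_of_pos ht _
    have key : ∀ u ∈ Set.Icc (0:ℝ) 1, f t u ≤ 1 := by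
      intro u hu
      obtain ⟨hu0, hu1⟩ := hu
      have h1 : (1:ℝ) ≤ u ^ k + (1 - u) ^ k := by
        have := rpow_add_le_add_rpow' hu0 (by linarith : (0:ℝ) ≤ 1 - u) hk.le hk1
        simpa using this
      have h2 : (1 - u) ^ k ≤ (l : ℝ) * (1 - u) ^ k := by
        have hnn : (0:ℝ) ≤ (1 - u) ^ k := Real.rpow_nonneg (by linarith) _
        nlinarith
      have h3 : (0:ℝ) ≤ u ^ k + (l : ℝ) * (1 - u) ^ k - 1 := by linarith
      have : -(t ^ k * (u ^ k + (l : ℝ) * (1 - u) ^ k - 1)) ≤ 0 := by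
        have := mul_nonneg hpt.le h3; linarith
      calc f t u ≤ Real.exp 0 := Real.exp_le_exp.mpr this
        _ = 1 := Real.exp_zero
    calc (∫ u in (0:ℝ)..1, f t u) ≤ ∫ _u in (0:ℝ)..1, (1:ℝ) :=
          intervalIntegral.integral_mono_on (by norm_num)
            ((hfc t).intervalIntegrable _ _) (_root_.intervalIntegrable_const) key
      _ = 1 := by simp
end
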